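/- arXiv:1309.2021 — 4 statements merged into one kernel-verified Lean document; each statement's English description precedes it below -/
import Mathlib

section
/- There exists a constant c > 0 depending only on n and σ with the following property: if U is nonnegative and continuous on {X = (x,t) : |X| ≤ 2, t ≥ 0}, C² on 𝔅_2^+, and satisfies ΔU(X) + ((1−2σ)/t)·∂_t U(X) = 0 for all X ∈ 𝔅_2^+, then inf over 𝔅_1^+ of U ≥ c · inf over B_2 of u, where u(x) := U(x,0). -/
open scoped Topology MeasureTheory RealInnerProductSpace
open Filter MeasureTheory

noncomputable section

/-- Points of `ℝ^{n+1}`, written `X = (x, t)` with `x ∈ ℝⁿ` and `t ∈ ℝ`. -/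
abbrev Pt (n : ℕ) := EuclideanSpace ℝ (Fin n) × ℝ

/-- The Euclidean norm on `ℝ^{n+1} = ℝⁿ × ℝ`. -/
def enorm' {n : ℕ} (X : Pt n) : ℝ := Real.sqrt (‖X.1‖ ^ 2 + X.2 ^ 2)

/-- Partial derivative in the last (`t`) direction. -/
def dt {n : ℕ} (U : Pt n → ℝ) (X : Pt n) : ℝ := fderiv ℝ U X (0, 1)

/-- Second derivative in the direction `v`. -/
def d2 {n : ℕ} (U : Pt n → ℝ) (X v : Pt n) : ℝ :=
  fderiv ℝ (fun Y => fderiv ℝ U Y v) X v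

/-- The Laplacian on `ℝ^{n+1}`. -/
def lapl {n : ℕ} (U : Pt n → ℝ) (X : Pt n) : ℝ :=
  (∑ i : Fin n, d2 U X (EuclideanSpace.single i (1 : ℝ), (0 : ℝ))) + d2 U X (0, 1)

/-- `U` is a nonnegative solution of the extension problem on the punctured half-ball
`𝔅_R^+`: it is nonnegative and continuous on `{|X| ≤ R, t ≥ 0} \ {0}`, `C²` on `𝔅_R^+`,
satisfies `ΔU + ((1-2σ)/t) ∂_t U = 0` there, and satisfies the nonlinear Neumann condition
`lim_{t→0⁺} t^{1-2σ} ∂_t U(x,t) = -u(x)^{(n+2σ)/(n-2σ)}` for `x ∈ B_R \ {0}`. -/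
def ExtSol (n : ℕ) (σ R : ℝ) (U : Pt n → ℝ) : Prop :=
  (∀ X : Pt n, enorm' X ≤ R → 0 ≤ X.2 → X ≠ 0 → 0 ≤ U X) ∧
  ContinuousOn U ({X : Pt n | enorm' X ≤ R ∧ 0 ≤ X.2} \ {0}) ∧
  ContDiffOn ℝ 2 U {X : Pt n | enorm' X < R ∧ 0 < X.2} ∧
  (∀ X : Pt n, enorm' X < R → 0 < X.2 →
    lapl U X + ((1 - 2 * σ) / X.2) * dt U X = 0) ∧
  (∀ x : EuclideanSpace ℝ (Fin n), ‖x‖ < R → x ≠ 0 →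
    Tendsto (fun t : ℝ => t ^ (1 - 2 * σ) * dt U (x, t)) (𝓝[>] 0)
      (𝓝 (-(U (x, 0) ^ (((n : ℝ) + 2 * σ) / ((n : ℝ) - 2 * σ))))))

/-!
Weak comparison with explicit barriers for `L = Δ + ((1 - 2σ)/t) ∂_t`: at an interior minimum
of `U - g` the first derivatives vanish and the pure second derivatives are nonnegative, so
`L (U - g) ≥ 0` there, which is impossible when `L U = 0 < L g`.

Near `{t = 0}` the barrier `m (1 - 4|x - x₀|² + A t² - (A + 4) t^{2σ})` works because `t^{2σ}` is
`L`-harmonic while `L t² = 4(1 - σ)`; it yields `U ≥ m/2` on `{|x| ≤ 5/4, 0 < t ≤ τ}`. Above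
`t = τ` the drift is bounded by `1/τ`, and the barrier
`(m/2) (((1 - 16|x|²/25)² + β) e^{-k(t - τ)} - β)` on `B_{5/4} × [τ, 3/2]`, with `k` large,
carries a lower bound up to `t = 1`.
-/

open Set Metric

theorem IsLocalMin.deriv_deriv_nonneg {g : ℝ → ℝ} {x : ℝ} (h : IsLocalMin g x)
    (hc : ContinuousAt g x) : 0 ≤ deriv (deriv g) x := by
  by_contra! hneg
  -- the second derivative test would make `x` also a local maximum, so `g` is locally constant
  have hconst : g =ᶠ[𝓝 x] fun _ => g x :=
    (h.and (isLocalMax_of_deriv_deriv_neg hneg h.deriv_eq_zero hc)).mono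
      fun y hy => le_antisymm hy.2 hy.1
  have hderiv : deriv g =ᶠ[𝓝 x] fun _ => 0 :=
    hconst.eventually_nhds.mono fun y hy => by
      rw [(show g =ᶠ[𝓝 y] fun _ => g x from hy).deriv_eq, deriv_const]
  rw [hderiv.deriv_eq, deriv_const] at hneg
  exact hneg.false

namespace ExtensionHarnack

variable {n : ℕ}

def extOp (σ : ℝ) (U : Pt n → ℝ) (X : Pt n) : ℝ :=
  lapl U X + ((1 - 2 * σ) / X.2) * dt U X

section SecondDerivatives

variable {f g : Pt n → ℝ} {X : Pt n}

theorem eventually_differentiableAt_of_contDiffAt (hf : ContDiffAt ℝ 2 f X) :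
    ∀ᶠ Y in 𝓝 X, DifferentiableAt ℝ f Y :=
  (hf.eventually (by simp)).mono fun _ hY => hY.differentiableAt (by norm_num)

theorem differentiableAt_fderiv_apply_of_contDiffAt (hf : ContDiffAt ℝ 2 f X) (v : Pt n) :
    DifferentiableAt ℝ (fun Y => fderiv ℝ f Y v) X :=
  ((hf.fderiv_right (m := 1) (by norm_num)).differentiableAt (by norm_num)).clm_apply
    (differentiableAt_const v)

theorem d2_eq_deriv_deriv (hf : ContDiffAt ℝ 2 f X) (v : Pt n) :
    d2 f X v = deriv (deriv fun s : ℝ => f (X + s • v)) 0 := by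
  have hline : ∀ s : ℝ, HasDerivAt (fun s : ℝ => X + s • v) v s := fun s => by
    simpa using ((hasDerivAt_id s).smul_const v).const_add X
  have hline0 : Tendsto (fun s : ℝ => X + s • v) (𝓝 0) (𝓝 X) := by
    simpa using (hline 0).continuousAt.tendsto
  have hderiv : deriv (fun s : ℝ => f (X + s • v)) =ᶠ[𝓝 0]
      fun s => fderiv ℝ f (X + s • v) v :=
    (hline0.eventually (eventually_differentiableAt_of_contDiffAt hf)).mono fun s hs =>
      (hs.hasFDerivAt.comp_hasDerivAt s (hline s)).deriv
  have h2 := (differentiableAt_fderiv_apply_of_contDiffAt hf v).hasFDerivAt.comp_hasDerivAt_of_eq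
    (x := 0) (hline 0) (by simp)
  rw [hderiv.deriv_eq, d2]
  exact h2.deriv.symm

theorem d2_nonneg_of_isLocalMin (hf : ContDiffAt ℝ 2 f X) (h : IsLocalMin f X) (v : Pt n) :
    0 ≤ d2 f X v := by
  have hline : Continuous fun s : ℝ => X + s • v := by fun_prop
  rw [d2_eq_deriv_deriv hf v]
  refine IsLocalMin.deriv_deriv_nonneg ?_ ?_
  · exact IsLocalMin.comp_continuous (f := f) (by simpa using h) hline.continuousAt
  · exact hf.continuousAt.comp_of_eq hline.continuousAt (by simp)

theorem extOp_nonneg_of_isLocalMin (σ : ℝ) (hf : ContDiffAt ℝ 2 f X) (h : IsLocalMin f X) :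
    0 ≤ extOp σ f X := by
  have hdt : dt f X = 0 := by rw [dt, h.fderiv_eq_zero]; rfl
  rw [extOp, hdt, mul_zero, add_zero, lapl]
  exact add_nonneg (Finset.sum_nonneg fun i _ => d2_nonneg_of_isLocalMin hf h _)
    (d2_nonneg_of_isLocalMin hf h _)

theorem d2_sub (hf : ContDiffAt ℝ 2 f X) (hg : ContDiffAt ℝ 2 g X) (v : Pt n) :
    d2 (fun Y => f Y - g Y) X v = d2 f X v - d2 g X v := by
  have hfg : (fun Y => fderiv ℝ (fun Z => f Z - g Z) Y v) =ᶠ[𝓝 X]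
      fun Y => fderiv ℝ f Y v - fderiv ℝ g Y v := by
    filter_upwards [eventually_differentiableAt_of_contDiffAt hf,
      eventually_differentiableAt_of_contDiffAt hg] with Y hfY hgY
    rw [fderiv_fun_sub hfY hgY]
    rfl
  rw [d2, hfg.fderiv_eq, fderiv_fun_sub (differentiableAt_fderiv_apply_of_contDiffAt hf v)
    (differentiableAt_fderiv_apply_of_contDiffAt hg v)]
  rfl

theorem extOp_sub (σ : ℝ) (hf : ContDiffAt ℝ 2 f X) (hg : ContDiffAt ℝ 2 g X) :
    extOp σ (fun Y => f Y - g Y) X = extOp σ f X - extOp σ g X := by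
  have hdt : dt (fun Y => f Y - g Y) X = dt f X - dt g X := by
    rw [dt, fderiv_fun_sub (hf.differentiableAt (by norm_num))
      (hg.differentiableAt (by norm_num))]
    rfl
  simp only [extOp, lapl, hdt, d2_sub hf hg, Finset.sum_sub_distrib]
  ring

theorem d2_eq_of_eventuallyEq {h : Pt n → ℝ} {v : Pt n} {D : Pt n →L[ℝ] ℝ}
    (hfh : ∀ᶠ Y in 𝓝 X, fderiv ℝ f Y v = h Y) (hh : HasFDerivAt h D X) : d2 f X v = D v := by
  rw [d2, (show (fun Y => fderiv ℝ f Y v) =ᶠ[𝓝 X] h from hfh).fderiv_eq, hh.fderiv]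

end SecondDerivatives

section Separable

variable {φ φ' φ'' ψ ψ' ψ'' χ χ' χ'' : ℝ → ℝ} (x₀ : EuclideanSpace ℝ (Fin n))

theorem fderiv_sqDist_mul_add_apply {Y : Pt n} (hφ : ∀ s, HasDerivAt φ (φ' s) s)
    (hψ : HasDerivAt ψ (ψ' Y.2) Y.2) (hχ : HasDerivAt χ (χ' Y.2) Y.2) (v : Pt n) :
    fderiv ℝ (fun Y => φ (‖Y.1 - x₀‖ ^ 2) * ψ Y.2 + χ Y.2) Y v =
      ψ Y.2 * (φ' (‖Y.1 - x₀‖ ^ 2) * (2 * ⟪Y.1 - x₀, v.1⟫))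
        + (φ (‖Y.1 - x₀‖ ^ 2) * ψ' Y.2 + χ' Y.2) * v.2 := by
  have hG := (((hφ _).comp_hasFDerivAt Y ((hasFDerivAt_fst (p := Y)).sub_const x₀).norm_sq).fun_mul
    (hψ.comp_hasFDerivAt Y hasFDerivAt_snd)).fun_add (hχ.comp_hasFDerivAt Y hasFDerivAt_snd)
  refine (congrArg (fun L : Pt n →L[ℝ] ℝ => L v) hG.fderiv).trans ?_
  simp [inner_sub_left]
  ring

theorem d2_sqDist_mul_add_single {X : Pt n} (hφ : ∀ s, HasDerivAt φ (φ' s) s)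
    (hφ' : ∀ s, HasDerivAt φ' (φ'' s) s) (hψ : ∀ᶠ t in 𝓝 X.2, HasDerivAt ψ (ψ' t) t)
    (hχ : ∀ᶠ t in 𝓝 X.2, HasDerivAt χ (χ' t) t) (j : Fin n) :
    d2 (fun Y => φ (‖Y.1 - x₀‖ ^ 2) * ψ Y.2 + χ Y.2) X (EuclideanSpace.single j 1, 0) =
      ψ X.2 * (4 * φ'' (‖X.1 - x₀‖ ^ 2) * (X.1 j - x₀ j) ^ 2 + 2 * φ' (‖X.1 - x₀‖ ^ 2)) := by
  have hsnd : Tendsto Prod.snd (𝓝 X) (𝓝 X.2) := continuous_snd.continuousAt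
  have hcoord : HasFDerivAt (fun Y : Pt n => 2 * (Y.1 j - x₀ j)) _ X :=
    (((EuclideanSpace.proj j).comp (ContinuousLinearMap.fst ℝ _ ℝ)).hasFDerivAt.sub_const
      (x₀ j)).const_mul 2
  have hh := (hψ.self_of_nhds.comp_hasFDerivAt X hasFDerivAt_snd).fun_mul
    (((hφ' _).comp_hasFDerivAt X ((hasFDerivAt_fst (p := X)).sub_const x₀).norm_sq).fun_mul
      hcoord)
  rw [d2_eq_of_eventuallyEq
    (h := fun Y => ψ Y.2 * (φ' (‖Y.1 - x₀‖ ^ 2) * (2 * (Y.1 j - x₀ j)))) ?_ hh]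
  · simp [EuclideanSpace.inner_single_right]
    ring
  · filter_upwards [hsnd.eventually hψ, hsnd.eventually hχ] with Y hψY hχY
    rw [fderiv_sqDist_mul_add_apply x₀ hφ hψY hχY]
    simp [EuclideanSpace.inner_single_right]

theorem extOp_sqDist_mul_add (σ : ℝ) {X : Pt n}
    (hφ : ∀ s, HasDerivAt φ (φ' s) s) (hφ' : ∀ s, HasDerivAt φ' (φ'' s) s)
    (hψ : ∀ᶠ t in 𝓝 X.2, HasDerivAt ψ (ψ' t) t) (hψ' : HasDerivAt ψ' (ψ'' X.2) X.2)
    (hχ : ∀ᶠ t in 𝓝 X.2, HasDerivAt χ (χ' t) t) (hχ' : HasDerivAt χ' (χ'' X.2) X.2) :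
    extOp σ (fun Y => φ (‖Y.1 - x₀‖ ^ 2) * ψ Y.2 + χ Y.2) X =
      ψ X.2 * (4 * ‖X.1 - x₀‖ ^ 2 * φ'' (‖X.1 - x₀‖ ^ 2) + 2 * n * φ' (‖X.1 - x₀‖ ^ 2))
        + φ (‖X.1 - x₀‖ ^ 2) * (ψ'' X.2 + (1 - 2 * σ) / X.2 * ψ' X.2)
        + (χ'' X.2 + (1 - 2 * σ) / X.2 * χ' X.2) := by
  set s := ‖X.1 - x₀‖ ^ 2 with hs
  have hsnd : Tendsto Prod.snd (𝓝 X) (𝓝 X.2) := continuous_snd.continuousAt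
  have ht : d2 (fun Y => φ (‖Y.1 - x₀‖ ^ 2) * ψ Y.2 + χ Y.2) X (0, 1) =
      φ s * ψ'' X.2 + χ'' X.2 := by
    have hh := (((hφ _).comp_hasFDerivAt X ((hasFDerivAt_fst (p := X)).sub_const x₀).norm_sq).fun_mul
      (hψ'.comp_hasFDerivAt X hasFDerivAt_snd)).fun_add (hχ'.comp_hasFDerivAt X hasFDerivAt_snd)
    rw [d2_eq_of_eventuallyEq (h := fun Y => φ (‖Y.1 - x₀‖ ^ 2) * ψ' Y.2 + χ' Y.2) ?_ hh]
    · simp [hs]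
    · filter_upwards [hsnd.eventually hψ, hsnd.eventually hχ] with Y hψY hχY
      rw [fderiv_sqDist_mul_add_apply x₀ hφ hψY hχY]
      simp
  have hdt : dt (fun Y => φ (‖Y.1 - x₀‖ ^ 2) * ψ Y.2 + χ Y.2) X = φ s * ψ' X.2 + χ' X.2 := by
    rw [dt, fderiv_sqDist_mul_add_apply x₀ hφ hψ.self_of_nhds hχ.self_of_nhds]
    simp [hs]
  have hsum : ∑ j : Fin n, (X.1 j - x₀ j) ^ 2 = s := by
    simp [hs, EuclideanSpace.norm_sq_eq]
  have hlap_x : ∑ j : Fin n, ψ X.2 * (4 * φ'' s * (X.1 j - x₀ j) ^ 2 + 2 * φ' s) =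
      ψ X.2 * (4 * s * φ'' s + 2 * n * φ' s) := by
    rw [← Finset.mul_sum, Finset.sum_add_distrib, ← Finset.mul_sum, hsum, Finset.sum_const,
      Finset.card_univ, Fintype.card_fin, nsmul_eq_mul]
    ring
  rw [extOp, lapl, Finset.sum_congr rfl fun j _ => d2_sqDist_mul_add_single x₀ hφ hφ' hψ hχ j,
    ht, hdt, hlap_x]
  ring

theorem contDiff_sqDist : ContDiff ℝ 2 fun Y : Pt n => ‖Y.1 - x₀‖ ^ 2 :=
  (contDiff_norm_sq ℝ).comp (contDiff_fst.sub contDiff_const)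

end Separable

structure IsSolOn (σ : ℝ) (U : Pt n → ℝ) (K O : Set (Pt n)) : Prop where
  continuousOn : ContinuousOn U K
  contDiffOn : ContDiffOn ℝ 2 U O
  extOp_eq_zero : ∀ X ∈ O, extOp σ U X = 0

section Comparison

variable {σ : ℝ} {U g : Pt n → ℝ} {K O : Set (Pt n)}

theorem IsSolOn.mono {K' O' : Set (Pt n)} (hU : IsSolOn σ U K O) (hK : K' ⊆ K) (hO : O' ⊆ O) :
    IsSolOn σ U K' O' :=
  ⟨hU.continuousOn.mono hK, hU.contDiffOn.mono hO, fun X hX => hU.extOp_eq_zero X (hO hX)⟩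

theorem IsSolOn.le_of_extOp_pos (hU : IsSolOn σ U K O) (hK : IsCompact K) (hO : IsOpen O)
    (hOK : O ⊆ K) (hgc : ContinuousOn g K) (hg : ∀ X ∈ O, ContDiffAt ℝ 2 g X)
    (hLg : ∀ X ∈ O, 0 < extOp σ g X) (hbd : ∀ X ∈ K \ O, g X ≤ U X) {X : Pt n} (hX : X ∈ K) :
    g X ≤ U X := by
  obtain ⟨X₀, hX₀K, hmin⟩ := hK.exists_isMinOn ⟨X, hX⟩ (hU.continuousOn.sub hgc)
  have hX₀ : g X₀ ≤ U X₀ := by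
    by_cases hX₀O : X₀ ∈ O
    · have hU₀ : ContDiffAt ℝ 2 U X₀ := hU.contDiffOn.contDiffAt (hO.mem_nhds hX₀O)
      have hloc : IsLocalMin (fun Y => U Y - g Y) X₀ :=
        hmin.isLocalMin (mem_of_superset (hO.mem_nhds hX₀O) hOK)
      have h := extOp_nonneg_of_isLocalMin σ (hU₀.sub (hg X₀ hX₀O)) hloc
      rw [extOp_sub σ hU₀ (hg X₀ hX₀O), hU.extOp_eq_zero X₀ hX₀O] at h
      linarith [hLg X₀ hX₀O]
    · exact hbd X₀ ⟨hX₀K, hX₀O⟩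
  linarith [show U X₀ - g X₀ ≤ U X - g X from hmin hX]

end Comparison

def closedHalfBall (R : ℝ) : Set (Pt n) := {X | enorm' X ≤ R ∧ 0 ≤ X.2}

def openHalfBall (R : ℝ) : Set (Pt n) := {X | enorm' X < R ∧ 0 < X.2}

def cyl (x₀ : EuclideanSpace ℝ (Fin n)) (ρ a b : ℝ) : Set (Pt n) := closedBall x₀ ρ ×ˢ Icc a b

def openCyl (x₀ : EuclideanSpace ℝ (Fin n)) (ρ a b : ℝ) : Set (Pt n) := ball x₀ ρ ×ˢ Ioo a b

section Geometry

variable {x₀ : EuclideanSpace ℝ (Fin n)} {ρ a b : ℝ}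

theorem isCompact_cyl : IsCompact (cyl x₀ ρ a b) := (isCompact_closedBall _ _).prod isCompact_Icc

theorem isOpen_openCyl : IsOpen (openCyl x₀ ρ a b) := isOpen_ball.prod isOpen_Ioo

theorem openCyl_subset_cyl : openCyl x₀ ρ a b ⊆ cyl x₀ ρ a b :=
  prod_mono ball_subset_closedBall Ioo_subset_Icc_self

theorem mem_cyl_iff {X : Pt n} :
    X ∈ cyl x₀ ρ a b ↔ ‖X.1 - x₀‖ ≤ ρ ∧ a ≤ X.2 ∧ X.2 ≤ b := by
  simp [cyl, dist_eq_norm]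

theorem norm_eq_or_eq_or_eq_of_mem_cyl_diff {X : Pt n}
    (hX : X ∈ cyl x₀ ρ a b \ openCyl x₀ ρ a b) : ‖X.1 - x₀‖ = ρ ∨ X.2 = a ∨ X.2 = b := by
  obtain ⟨hK, hO⟩ := hX
  rw [mem_cyl_iff] at hK
  simp only [openCyl, mem_prod, mem_ball, dist_eq_norm, mem_Ioo] at hO
  by_contra! h
  exact hO ⟨lt_of_le_of_ne hK.1 h.1, lt_of_le_of_ne hK.2.1 h.2.1.symm, lt_of_le_of_ne hK.2.2 h.2.2⟩

theorem cyl_subset_closedHalfBall {R : ℝ} (ha : 0 ≤ a) (h : (‖x₀‖ + ρ) ^ 2 + b ^ 2 ≤ R ^ 2)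
    (hR : 0 ≤ R) : cyl x₀ ρ a b ⊆ closedHalfBall R := by
  intro X hX
  rw [mem_cyl_iff] at hX
  have hx : ‖X.1‖ ≤ ‖x₀‖ + ρ := by
    simpa [sub_add_cancel] using (norm_add_le (X.1 - x₀) x₀).trans (by linarith)
  refine ⟨(Real.sqrt_le_left hR).2 ?_, ha.trans hX.2.1⟩
  nlinarith [norm_nonneg X.1]

theorem openCyl_subset_openHalfBall {R : ℝ} (ha : 0 ≤ a) (h : (‖x₀‖ + ρ) ^ 2 + b ^ 2 ≤ R ^ 2)
    (hR : 0 ≤ R) : openCyl x₀ ρ a b ⊆ openHalfBall R := by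
  intro X hX
  obtain ⟨hx, ht⟩ := hX
  rw [mem_ball, dist_eq_norm] at hx
  have hx' : ‖X.1‖ < ‖x₀‖ + ρ := by
    simpa [sub_add_cancel] using (norm_add_le (X.1 - x₀) x₀).trans_lt (by linarith)
  have hR' : 0 < R := lt_of_le_of_ne hR (by rintro rfl; nlinarith [norm_nonneg X.1])
  refine ⟨(Real.sqrt_lt' hR').2 ?_, ha.trans_lt ht.1⟩
  nlinarith [norm_nonneg X.1, ht.1, ht.2]

theorem norm_fst_le_enorm' (X : Pt n) : ‖X.1‖ ≤ enorm' X :=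
  Real.le_sqrt_of_sq_le (by nlinarith [sq_nonneg X.2])

theorem snd_le_enorm' (X : Pt n) : X.2 ≤ enorm' X :=
  Real.le_sqrt_of_sq_le (by nlinarith [sq_nonneg ‖X.1‖])

theorem enorm'_mk_zero (x : EuclideanSpace ℝ (Fin n)) : enorm' ((x, 0) : Pt n) = ‖x‖ := by
  simp [enorm', Real.sqrt_sq (norm_nonneg x)]

end Geometry

section BarrierNearBottom

def coefA (n : ℕ) (σ : ℝ) : ℝ := (2 * n + 1) / (1 - σ)

/-- The `t^{2σ}` term, annihilated by `extOp σ`, makes the barrier nonpositive on the lateral and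
top faces of `cyl x₀ (1/2) 0 (1/2)` while keeping it continuous up to `t = 0`. -/
def barrierA (σ m : ℝ) (x₀ : EuclideanSpace ℝ (Fin n)) (Y : Pt n) : ℝ :=
  m * (1 - 4 * ‖Y.1 - x₀‖ ^ 2) + m * (coefA n σ * Y.2 ^ 2 - (coefA n σ + 4) * Y.2 ^ (2 * σ))

variable {σ m : ℝ} (x₀ : EuclideanSpace ℝ (Fin n))

theorem extOp_barrierA (hσ : σ < 1) {X : Pt n} (hX : 0 < X.2) :
    extOp σ (barrierA σ m x₀) X = 4 * m := by
  set A := coefA n σ with hA_def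
  have hA : A * (1 - σ) = 2 * n + 1 := div_mul_cancel₀ _ (by linarith)
  have hφ : ∀ s, HasDerivAt (fun s : ℝ => m * (1 - 4 * s)) (-4 * m) s := fun s =>
    ((((hasDerivAt_id' s).const_mul 4).const_sub 1).const_mul m).congr_deriv (by ring)
  have hχ : ∀ᶠ t in 𝓝 X.2, HasDerivAt (fun t : ℝ => m * (A * t ^ 2 - (A + 4) * t ^ (2 * σ)))
      (m * (A * (2 * t) - (A + 4) * (2 * σ * t ^ (2 * σ - 1)))) t := by
    filter_upwards [lt_mem_nhds hX] with t ht
    exact ((((hasDerivAt_pow 2 t).const_mul A).sub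
      ((Real.hasDerivAt_rpow_const (p := 2 * σ) (Or.inl ht.ne')).const_mul (A + 4))).const_mul
        m).congr_deriv (by push_cast; ring)
  have hχ' : HasDerivAt (fun t : ℝ => m * (A * (2 * t) - (A + 4) * (2 * σ * t ^ (2 * σ - 1))))
      (m * (A * 2 - (A + 4) * (2 * σ * ((2 * σ - 1) * X.2 ^ (2 * σ - 2))))) X.2 :=
    ((((hasDerivAt_id' X.2).const_mul 2 |>.const_mul A).sub
      (((Real.hasDerivAt_rpow_const (p := 2 * σ - 1) (Or.inl hX.ne')).const_mul (2 * σ)).const_mul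
        (A + 4))).const_mul m).congr_deriv (by ring_nf)
  have hsep : barrierA σ m x₀ = fun Y => (fun s => m * (1 - 4 * s)) (‖Y.1 - x₀‖ ^ 2) *
      (fun _ => (1 : ℝ)) Y.2 + (fun t => m * (A * t ^ 2 - (A + 4) * t ^ (2 * σ))) Y.2 :=
    funext fun Y => by simp [barrierA, hA_def]
  rw [hsep, extOp_sqDist_mul_add x₀ σ (φ'' := fun _ => 0) (ψ' := fun _ => 0) (ψ'' := fun _ => 0)
    (χ'' := fun t => m * (A * 2 - (A + 4) * (2 * σ * ((2 * σ - 1) * t ^ (2 * σ - 2)))))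
    hφ (fun _ => hasDerivAt_const _ _) (Eventually.of_forall fun _ => hasDerivAt_const _ _)
    (hasDerivAt_const _ _) hχ hχ']
  have hpow : X.2 ^ (2 * σ - 1) = X.2 ^ (2 * σ - 2) * X.2 := by
    rw [← Real.rpow_add_one hX.ne']
    ring_nf
  have hdrift : (1 - 2 * σ) / X.2 *
      (m * (A * (2 * X.2) - (A + 4) * (2 * σ * (X.2 ^ (2 * σ - 2) * X.2)))) =
      (1 - 2 * σ) * m * (2 * A - (A + 4) * (2 * σ * X.2 ^ (2 * σ - 2))) := by
    field_simp
  rw [hpow, hdrift]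
  linear_combination (4 * m) * hA

theorem continuous_barrierA (hσ : 0 < σ) : Continuous (barrierA σ m x₀) := by
  have hq := (contDiff_sqDist x₀).continuous
  have hr : Continuous fun Y : Pt n => Y.2 ^ (2 * σ) :=
    continuous_snd.rpow_const fun _ => Or.inr (by positivity)
  unfold barrierA
  fun_prop

theorem contDiffAt_barrierA {X : Pt n} (hX : 0 < X.2) : ContDiffAt ℝ 2 (barrierA σ m x₀) X := by
  have hq := (contDiff_sqDist x₀).contDiffAt (x := X)
  have hr := (Real.contDiffAt_rpow_const_of_ne (n := 2) (p := 2 * σ) hX.ne').comp X contDiffAt_snd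
  unfold barrierA
  fun_prop

theorem sq_le_rpow_two_mul {t : ℝ} (hσ0 : 0 ≤ σ) (hσ1 : σ ≤ 1) (ht0 : 0 ≤ t) (ht1 : t ≤ 1) :
    t ^ 2 ≤ t ^ (2 * σ) := by
  rw [← Real.rpow_two]
  exact Real.rpow_le_rpow_of_exponent_ge' ht0 ht1 (by positivity) (by linarith)

theorem barrierA_le (hσ0 : 0 ≤ σ) (hσ1 : σ < 1) (hm : 0 ≤ m) {Y : Pt n} (ht0 : 0 ≤ Y.2)
    (ht1 : Y.2 ≤ 1) : barrierA σ m x₀ Y ≤ m * (1 - 4 * ‖Y.1 - x₀‖ ^ 2 - 4 * Y.2 ^ 2) := by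
  have hA : 0 ≤ coefA n σ := div_nonneg (by positivity) (by linarith)
  have h2 := sq_le_rpow_two_mul hσ0 hσ1.le ht0 ht1
  have ht : coefA n σ * Y.2 ^ 2 - (coefA n σ + 4) * Y.2 ^ (2 * σ) ≤ -4 * Y.2 ^ 2 := by
    nlinarith [mul_le_mul_of_nonneg_left h2 hA]
  calc barrierA σ m x₀ Y ≤ m * (1 - 4 * ‖Y.1 - x₀‖ ^ 2) + m * (-4 * Y.2 ^ 2) := by
        unfold barrierA; gcongr
    _ = _ := by ring

theorem mul_one_sub_rpow_le_of_le_on_cyl_bottom {U : Pt n → ℝ} (hσ0 : 0 < σ) (hσ1 : σ < 1)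
    (hm : 0 < m) (hU : IsSolOn σ U (cyl x₀ (1 / 2) 0 (1 / 2)) (openCyl x₀ (1 / 2) 0 (1 / 2)))
    (hU0 : ∀ X ∈ cyl x₀ (1 / 2) 0 (1 / 2), 0 ≤ U X)
    (hbot : ∀ x ∈ closedBall x₀ (1 / 2), m ≤ U (x, 0)) {t : ℝ} (ht0 : 0 ≤ t) (ht : t ≤ 1 / 2) :
    m * (1 - (coefA n σ + 4) * t ^ (2 * σ)) ≤ U (x₀, t) := by
  have hbd : ∀ X ∈ cyl x₀ (1 / 2) 0 (1 / 2) \ openCyl x₀ (1 / 2) 0 (1 / 2),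
      barrierA σ m x₀ X ≤ U X := by
    intro X hX
    obtain ⟨hx, ht0, ht1⟩ := mem_cyl_iff.1 hX.1
    have hle := barrierA_le x₀ hσ0.le hσ1 hm.le ht0 (by linarith)
    rcases norm_eq_or_eq_or_eq_of_mem_cyl_diff hX with h | h | h
    · rw [h] at hle
      nlinarith [hU0 X hX.1]
    · have : m ≤ U X := by
        simpa [← h] using hbot X.1 (by rwa [mem_closedBall, dist_eq_norm])
      rw [h] at hle
      nlinarith [norm_nonneg (X.1 - x₀)]
    · rw [h] at hle
      nlinarith [hU0 X hX.1, norm_nonneg (X.1 - x₀)]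
  have hcomp := hU.le_of_extOp_pos isCompact_cyl isOpen_openCyl openCyl_subset_cyl
    (continuous_barrierA x₀ hσ0).continuousOn (fun X hX => contDiffAt_barrierA x₀ hX.2.1)
    (fun X hX => by rw [extOp_barrierA x₀ hσ1 hX.2.1]; linarith) hbd
    (mem_cyl_iff.2 ⟨by norm_num, ht0, ht⟩ : ((x₀, t) : Pt n) ∈ _)
  have hA : 0 ≤ coefA n σ := div_nonneg (by positivity) (by linarith)
  refine le_trans ?_ hcomp
  simp only [barrierA, sub_self, norm_zero]
  nlinarith [mul_nonneg hA (sq_nonneg t)]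

end BarrierNearBottom

section BarrierAbove

/-- The square of `1 - |x|²/(5/4)²` has positive Laplacian near the lateral face, where the
exponential factor cannot help; the constant `β` handles the top face `t = 3/2`. -/
def barrierB (m k τ β : ℝ) (Y : Pt n) : ℝ :=
  m * (((1 - 16 / 25 * ‖Y.1‖ ^ 2) ^ 2 + β) * Real.exp (-(k * (Y.2 - τ))) - β)

theorem contDiff_barrierB (m k τ β : ℝ) : ContDiff ℝ 2 (barrierB (n := n) m k τ β) := by
  have hq := contDiff_sqDist (0 : EuclideanSpace ℝ (Fin n))
  simp only [sub_zero] at hq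
  unfold barrierB
  fun_prop

-- with `p = 1 - a s` the bracket is `((ν + 2) p - 2a)² + 4a(2 - a) + p² (P - (ν + 2)²) + β P`
theorem barrierB_bracket_pos {a s β P ν : ℝ} (ha0 : 0 < a) (ha2 : a < 2) (hβ : 0 ≤ β)
    (hP : (ν + 2) ^ 2 ≤ P) :
    0 < 8 * a ^ 2 * s - 4 * a * ν * (1 - a * s) + ((1 - a * s) ^ 2 + β) * P := by
  nlinarith [sq_nonneg ((ν + 2) * (1 - a * s) - 2 * a), mul_pos ha0 (by linarith : 0 < 2 - a),
    mul_le_mul_of_nonneg_left hP (sq_nonneg (1 - a * s)),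
    mul_nonneg hβ ((sq_nonneg (ν + 2)).trans hP)]

theorem extOp_barrierB_pos {σ m k τ β : ℝ} (hσ : 0 ≤ σ) (hm : 0 < m) (hβ : 0 ≤ β) (hτ : 0 < τ)
    (hk : 1 / τ + n + 2 ≤ k) {X : Pt n} (hX : τ ≤ X.2) :
    0 < extOp σ (barrierB m k τ β) X := by
  set a : ℝ := 16 / 25
  set e : ℝ → ℝ := fun t => Real.exp (-(k * (t - τ)))
  have he : ∀ t, HasDerivAt e (-k * e t) t := fun t => by
    simpa [e, mul_comm] using ((((hasDerivAt_id' t).sub_const τ).const_mul k).neg).exp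
  have hφ : ∀ s, HasDerivAt (fun s : ℝ => m * ((1 - a * s) ^ 2 + β))
      (-2 * a * m * (1 - a * s)) s := fun s =>
    (((((hasDerivAt_id' s).const_mul a).const_sub 1).pow 2).add_const β |>.const_mul
      m).congr_deriv (by ring)
  have hφ' : ∀ s, HasDerivAt (fun s : ℝ => -2 * a * m * (1 - a * s)) (2 * a ^ 2 * m) s :=
    fun s => ((((hasDerivAt_id' s).const_mul a).const_sub 1).const_mul
      (-2 * a * m)).congr_deriv (by ring)
  have hψ' : HasDerivAt (fun t => -k * e t) (k ^ 2 * e X.2) X.2 :=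
    ((he X.2).const_mul (-k)).congr_deriv (by ring)
  have hsep : barrierB (n := n) m k τ β = fun Y =>
      (fun s => m * ((1 - a * s) ^ 2 + β)) (‖Y.1 - 0‖ ^ 2) * e Y.2 + (fun _ => -(m * β)) Y.2 :=
    funext fun Y => by simp only [barrierB, sub_zero, e, a]; ring
  rw [hsep, extOp_sqDist_mul_add 0 σ (ψ'' := fun t => k ^ 2 * e t) (χ' := fun _ => 0)
    (χ'' := fun _ => 0) hφ hφ' (Eventually.of_forall he) hψ'
    (Eventually.of_forall fun _ => hasDerivAt_const _ _) (hasDerivAt_const _ _)]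
  set s := ‖X.1 - 0‖ ^ 2
  set P := k ^ 2 - (1 - 2 * σ) / X.2 * k
  have hdrift : (1 - 2 * σ) / X.2 ≤ 1 / τ := div_le_div₀ zero_le_one (by linarith) hτ hX
  have hP : ((n : ℝ) + 2) ^ 2 ≤ P := by
    have hkn : (n : ℝ) + 2 ≤ k := by linarith [one_div_pos.2 hτ]
    have : ((n : ℝ) + 2) * (n + 2) ≤ k * (k - (1 - 2 * σ) / X.2) :=
      mul_le_mul hkn (by linarith) (by positivity) (by linarith)
    linarith
  have heq : e X.2 * (4 * s * (2 * a ^ 2 * m) + 2 * n * (-2 * a * m * (1 - a * s))) +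
      m * ((1 - a * s) ^ 2 + β) * (k ^ 2 * e X.2 + (1 - 2 * σ) / X.2 * (-k * e X.2)) +
      (0 + (1 - 2 * σ) / X.2 * 0) =
      m * e X.2 * (8 * a ^ 2 * s - 4 * a * n * (1 - a * s) + ((1 - a * s) ^ 2 + β) * P) := by
    ring
  rw [heq]
  exact mul_pos (mul_pos hm (Real.exp_pos _)) (barrierB_bracket_pos (by norm_num) (by norm_num) hβ hP)

theorem barrierB_le_of_mem_cyl_diff {m k τ β : ℝ} {U : Pt n → ℝ} (hm : 0 ≤ m) (hk : 0 ≤ k)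
    (hβ : 0 ≤ β) (htop : (1 + β) * Real.exp (-(k * (3 / 2 - τ))) ≤ β)
    (hU0 : ∀ X ∈ cyl 0 (5 / 4) τ (3 / 2), 0 ≤ U X)
    (hbot : ∀ x ∈ closedBall (0 : EuclideanSpace ℝ (Fin n)) (5 / 4), m ≤ U (x, τ)) {Y : Pt n}
    (hY : Y ∈ cyl 0 (5 / 4) τ (3 / 2) \ openCyl 0 (5 / 4) τ (3 / 2)) :
    barrierB m k τ β Y ≤ U Y := by
  obtain ⟨hy, ht0, -⟩ := mem_cyl_iff.1 hY.1
  rw [sub_zero] at hy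
  have he : Real.exp (-(k * (Y.2 - τ))) ≤ 1 := Real.exp_le_one_iff.2 (by nlinarith)
  have hΦ0 : 0 ≤ 16 / 25 * ‖Y.1‖ ^ 2 := by positivity
  have hΦ1 : 16 / 25 * ‖Y.1‖ ^ 2 ≤ 1 := by nlinarith [norm_nonneg Y.1]
  have hΦ : (1 - 16 / 25 * ‖Y.1‖ ^ 2) ^ 2 ≤ 1 := by nlinarith
  have hU := hU0 Y hY.1
  unfold barrierB
  rcases norm_eq_or_eq_or_eq_of_mem_cyl_diff hY with h | h | h
  · rw [sub_zero] at h
    rw [h]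
    norm_num
    nlinarith [mul_nonneg hm hβ]
  · have hmU : m ≤ U Y := by simpa [← h] using hbot Y.1 (by simpa using hy)
    rw [h, sub_self, mul_zero, neg_zero, Real.exp_zero]
    nlinarith [mul_le_mul_of_nonneg_left hΦ hm]
  · rw [h]
    nlinarith [mul_le_mul_of_nonneg_right (add_le_add_right hΦ β)
      (Real.exp_pos (-(k * (3 / 2 - τ)))).le]

theorem exp_neg_half_le {k : ℝ} (hk : 60 ≤ k) : Real.exp (-(k / 2)) ≤ 81 / 2500 := by
  rw [Real.exp_neg, inv_le_comm₀ (Real.exp_pos _) (by norm_num)]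
  linarith [Real.add_one_le_exp (k / 2)]

theorem exists_pos_mul_le_of_le_on_cyl_bottom {σ τ : ℝ} (hσ : 0 ≤ σ) (hτ0 : 0 < τ)
    (hτ : τ ≤ 1 / 2) :
    ∃ c, 0 < c ∧ c ≤ 1 ∧ ∀ (m : ℝ) (U : Pt n → ℝ), 0 < m →
      IsSolOn σ U (cyl 0 (5 / 4) τ (3 / 2)) (openCyl 0 (5 / 4) τ (3 / 2)) →
      (∀ X ∈ cyl 0 (5 / 4) τ (3 / 2), 0 ≤ U X) →
      (∀ x ∈ closedBall (0 : EuclideanSpace ℝ (Fin n)) (5 / 4), m ≤ U (x, τ)) →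
      ∀ X : Pt n, ‖X.1‖ ≤ 1 → τ ≤ X.2 → X.2 ≤ 1 → c * m ≤ U X := by
  -- `k ≥ 1/τ + n + 2` beats the drift `(1 - 2σ)/t ≤ 1/τ`; the margin makes `e^{-k/2}` small
  set k : ℝ := 1 / τ + n + 60
  set e₁ := Real.exp (-(k * (1 - τ)))
  set e₂ := Real.exp (-(k * (3 / 2 - τ)))
  have hk : 60 ≤ k := by linarith [one_div_pos.2 hτ0, n.cast_nonneg (α := ℝ)]
  have he₁ : e₁ ≤ 1 := Real.exp_le_one_iff.2 (by nlinarith)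
  have he₂ : e₂ ≤ 81 / 2500 * e₁ := by
    rw [show e₂ = e₁ * Real.exp (-(k / 2)) by simp only [e₁, e₂, ← Real.exp_add]; ring_nf]
    nlinarith [exp_neg_half_le hk, Real.exp_pos (-(k * (1 - τ)))]
  refine ⟨81 / 1250 * e₁, by positivity, by linarith, fun m U hm hU hU0 hbot X hx ht0 ht1 => ?_⟩
  have hcomp := hU.le_of_extOp_pos (g := barrierB m k τ (2 * e₂)) isCompact_cyl isOpen_openCyl
    openCyl_subset_cyl (contDiff_barrierB _ _ _ _).continuous.continuousOn
    (fun _ _ => (contDiff_barrierB _ _ _ _).contDiffAt)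
    (fun Y hY => extOp_barrierB_pos hσ hm (by positivity) hτ0 (by linarith) hY.2.1.le)
    (fun Y hY => barrierB_le_of_mem_cyl_diff hm.le (by linarith) (by positivity)
      (by nlinarith [Real.exp_pos (-(k * (3 / 2 - τ)))]) hU0 hbot hY)
    (mem_cyl_iff.2 ⟨by rw [sub_zero]; linarith, ht0, by linarith⟩)
  refine le_trans ?_ hcomp
  have hΦ : 81 / 625 ≤ (1 - 16 / 25 * ‖X.1‖ ^ 2) ^ 2 := by
    have : ‖X.1‖ ^ 2 ≤ 1 := by nlinarith [norm_nonneg X.1]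
    nlinarith
  have he : e₁ ≤ Real.exp (-(k * (X.2 - τ))) := Real.exp_le_exp.2 (by nlinarith)
  unfold barrierB
  nlinarith [mul_le_mul hΦ he (Real.exp_pos _).le (sq_nonneg _),
    mul_pos (Real.exp_pos (-(k * (3 / 2 - τ)))) (Real.exp_pos (-(k * (X.2 - τ))))]

end BarrierAbove

theorem exists_mul_rpow_le_half (β : ℝ) {p : ℝ} (hp : 0 < p) :
    ∃ τ : ℝ, 0 < τ ∧ τ ≤ 1 / 2 ∧ β * τ ^ p ≤ 1 / 2 := by
  have h : Tendsto (fun t : ℝ => β * t ^ p) (𝓝[>] 0) (𝓝 0) := by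
    have := ((Real.continuousAt_rpow_const 0 p (Or.inr hp.le)).const_mul β).tendsto
    simpa [Real.zero_rpow hp.ne'] using this.mono_left nhdsWithin_le_nhds
  obtain ⟨τ, hτ, hτI⟩ := ((h.eventually (gt_mem_nhds (by norm_num : (0 : ℝ) < 1 / 2))).and
    (Ioc_mem_nhdsGT (by norm_num : (0 : ℝ) < 1 / 2))).exists
  exact ⟨τ, hτI.1, hτI.2, hτ.le⟩

theorem exists_pos_mul_le_of_le_on_bottom {σ : ℝ} (hσ0 : 0 < σ) (hσ1 : σ < 1) :
    ∃ c, 0 < c ∧ ∀ U : Pt n → ℝ, IsSolOn σ U (closedHalfBall 2) (openHalfBall 2) →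
      (∀ X ∈ closedHalfBall 2, 0 ≤ U X) → ∀ m, 0 < m → (∀ x, ‖x‖ < 2 → m ≤ U (x, 0)) →
      ∀ X ∈ openHalfBall 1, c * m ≤ U X := by
  obtain ⟨τ, hτ0, hτ, hβτ⟩ := exists_mul_rpow_le_half (coefA n σ + 4) (p := 2 * σ) (by positivity)
  obtain ⟨c, hc0, hc1, hlift⟩ := exists_pos_mul_le_of_le_on_cyl_bottom (n := n) hσ0.le hτ0 hτ
  refine ⟨c / 2, by positivity, fun U hU hU0 m hm hbot X hX => ?_⟩
  have hnear : ∀ x₀ : EuclideanSpace ℝ (Fin n), ‖x₀‖ ≤ 5 / 4 → ∀ t, 0 ≤ t → t ≤ 1 / 2 →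
      m * (1 - (coefA n σ + 4) * t ^ (2 * σ)) ≤ U (x₀, t) := by
    intro x₀ hx₀ t ht0 ht
    have hgeom : (‖x₀‖ + 1 / 2) ^ 2 + (1 / 2) ^ 2 ≤ (2 : ℝ) ^ 2 := by nlinarith [norm_nonneg x₀]
    have hsub := cyl_subset_closedHalfBall (x₀ := x₀) le_rfl hgeom zero_le_two
    refine mul_one_sub_rpow_le_of_le_on_cyl_bottom x₀ hσ0 hσ1 hm
      (hU.mono hsub (openCyl_subset_openHalfBall le_rfl hgeom zero_le_two))
      (fun Y hY => hU0 Y (hsub hY)) (fun x hx => hbot x ?_) ht0 ht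
    rw [mem_closedBall, dist_eq_norm] at hx
    linarith [norm_le_norm_add_norm_sub' x x₀]
  have hgeom : (‖(0 : EuclideanSpace ℝ (Fin n))‖ + 5 / 4) ^ 2 + (3 / 2) ^ 2 ≤ (2 : ℝ) ^ 2 := by
    norm_num
  have hsub := cyl_subset_closedHalfBall hτ0.le hgeom zero_le_two
  have hlow := hlift (m / 2) U (half_pos hm)
    (hU.mono hsub (openCyl_subset_openHalfBall hτ0.le hgeom zero_le_two))
    (fun Y hY => hU0 Y (hsub hY))
    (fun x hx => by nlinarith [hnear x (by simpa using hx) τ hτ0.le hτ])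
  have hx1 : ‖X.1‖ ≤ 1 := (norm_fst_le_enorm' X).trans hX.1.le
  have ht1 : X.2 ≤ 1 := (snd_le_enorm' X).trans hX.1.le
  rcases le_or_gt X.2 τ with ht | ht
  · have hpow : X.2 ^ (2 * σ) ≤ τ ^ (2 * σ) := Real.rpow_le_rpow hX.2.le ht (by positivity)
    have hβ : 0 ≤ coefA n σ + 4 := by
      have : 0 ≤ coefA n σ := div_nonneg (by positivity) (by linarith)
      linarith
    have := hnear X.1 (by linarith) X.2 hX.2.le (by linarith)
    nlinarith [mul_le_mul_of_nonneg_left hpow hβ]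
  · linarith [hlow X hx1 ht.le ht1]

end ExtensionHarnack

theorem stmt_12_general (n : ℕ) (σ : ℝ) (hσ : σ ∈ Set.Ioo (0 : ℝ) 1) :
    ∃ c : ℝ, 0 < c ∧
      ∀ U : Pt n → ℝ,
        (∀ X : Pt n, enorm' X ≤ 2 → 0 ≤ X.2 → 0 ≤ U X) →
        ContinuousOn U {X : Pt n | enorm' X ≤ 2 ∧ 0 ≤ X.2} →
        ContDiffOn ℝ 2 U {X : Pt n | enorm' X < 2 ∧ 0 < X.2} →
        (∀ X : Pt n, enorm' X < 2 → 0 < X.2 →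
          lapl U X + ((1 - 2 * σ) / X.2) * dt U X = 0) →
        c * sInf ((fun x : EuclideanSpace ℝ (Fin n) => U (x, 0)) '' {x | ‖x‖ < 2}) ≤
          sInf (U '' {X : Pt n | enorm' X < 1 ∧ 0 < X.2}) := by
  obtain ⟨c, hc0, hc⟩ := ExtensionHarnack.exists_pos_mul_le_of_le_on_bottom (n := n) hσ.1 hσ.2
  refine ⟨c, hc0, fun U h₀ hUc hU2 hpde => ?_⟩
  have hbot0 : ∀ x : EuclideanSpace ℝ (Fin n), ‖x‖ < 2 → 0 ≤ U (x, 0) := fun x hx =>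
    h₀ _ (by rw [ExtensionHarnack.enorm'_mk_zero]; exact hx.le) le_rfl
  have hm0 : 0 ≤ sInf ((fun x : EuclideanSpace ℝ (Fin n) => U (x, 0)) '' {x | ‖x‖ < 2}) :=
    Real.sInf_nonneg (by rintro _ ⟨x, hx, rfl⟩; exact hbot0 x hx)
  rcases hm0.eq_or_lt with hm | hm
  · rw [← hm, mul_zero]
    exact Real.sInf_nonneg (by rintro _ ⟨X, hX, rfl⟩; exact h₀ X (by linarith [hX.1]) hX.2.le)
  · refine le_csInf ⟨U (0, 1 / 2), _, ⟨by norm_num [enorm'], by norm_num⟩, rfl⟩ ?_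
    rintro _ ⟨X, hX, rfl⟩
    exact hc U ⟨hUc, hU2, fun X hX => hpde X hX.1 hX.2⟩ (fun X hX => h₀ X hX.1 hX.2) _ hm
      (fun x hx => csInf_le ⟨0, by rintro _ ⟨x, hx, rfl⟩; exact hbot0 x hx⟩ ⟨x, hx, rfl⟩) X hX

/-- There is `c = c(n,σ) > 0` such that every nonnegative solution of
the degenerate equation on `𝔅_2^+`, continuous up to the boundary, satisfies
`inf_{𝔅_1^+} U ≥ c · inf_{B_2} u`. -/
theorem stmt_12 (n : ℕ) (hn : 2 ≤ n) (σ : ℝ) (hσ : σ ∈ Set.Ioo (0 : ℝ) 1) :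
    ∃ c : ℝ, 0 < c ∧
      ∀ U : Pt n → ℝ,
        (∀ X : Pt n, enorm' X ≤ 2 → 0 ≤ X.2 → 0 ≤ U X) →
        ContinuousOn U {X : Pt n | enorm' X ≤ 2 ∧ 0 ≤ X.2} →
        ContDiffOn ℝ 2 U {X : Pt n | enorm' X < 2 ∧ 0 < X.2} →
        (∀ X : Pt n, enorm' X < 2 → 0 < X.2 →
          lapl U X + ((1 - 2 * σ) / X.2) * dt U X = 0) →
        c * sInf ((fun x : EuclideanSpace ℝ (Fin n) => U (x, 0)) '' {x | ‖x‖ < 2}) ≤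
          sInf (U '' {X : Pt n | enorm' X < 1 ∧ 0 < X.2}) :=
  stmt_12_general n σ hσ
end
end

section
/- Let n ≥ 2 be an integer, σ ∈ (0,1), and 0 < ε ≤ 1. Let u be a positive C¹ function on B_1 \ {0} ⊂ ℝⁿ such that for every x with 0 < |x| ≤ ε/2, every λ with 0 < λ < |x|, and every y with |y − x| ≥ λ and 0 < |y| ≤ 1, the moving-sphere inequality (λ/|y − x|)^{n−2σ} · u(x + λ²(y − x)/|y − x|²) ≤ u(y) holds. Then |∇u(x)| ≤ ((n−2σ)/|x|) · u(x) for all x with 0 < |x| < ε/4 (equivalently, |∇ log u(x)| ≤ (n−2σ)/|x|). -/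
/-!
Fix `0 < |p| < ε/4` and a unit vector `e`, and put `x = p - (|p|/2) e`, so that `|p - x| = |p|/2`
and `|p|/2 ≤ |x| ≤ ε/2`. The moving-sphere inequality centred at `x` bounds
`λ ↦ (λ/|p - x|)^(n-2σ) u(x + λ²(p - x)/|p - x|²)` by `u(p)` for `0 < λ < |p - x|`, and at
`λ = |p - x|` the reflected point is `p` itself. Hence the left derivative at `λ = |p - x|` is
nonnegative, i.e. `(n-2σ) u(p) + |p| ∇u(p)·e ≥ 0`. Since `e` is arbitrary, this bounds `|∇u(p)|`.
-/

open Set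

theorem HasDerivAt.nonneg_of_forall_le_left {g : ℝ → ℝ} {g' a t : ℝ} (hg : HasDerivAt g g' t)
    (hat : a < t) (hle : ∀ l ∈ Ioo a t, g l ≤ g t) : 0 ≤ g' := by
  have hmax : IsLocalMaxOn g (Ioc a t) t := by
    refine IsMaxOn.localize fun l hl => ?_
    rcases hl.2.eq_or_lt with rfl | hlt
    exacts [le_refl (g l), hle l ⟨hl.1, hlt⟩]
  have hseg : segment ℝ t ((a + t) / 2) ⊆ Ioc a t := by
    rw [segment_symm, segment_eq_Icc (by linarith)]
    exact Icc_subset_Ioc (by linarith) le_rfl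
  have hfermat := hmax.hasFDerivWithinAt_nonpos hg.hasFDerivAt.hasFDerivWithinAt
    (sub_mem_posTangentConeAt_of_segment_subset hseg)
  simp only [ContinuousLinearMap.toSpanSingleton_apply, smul_eq_mul] at hfermat
  nlinarith

theorem HasFDerivAt.nonneg_of_moving_sphere {E : Type*} [NormedAddCommGroup E] [NormedSpace ℝ E]
    {u : E → ℝ} {L : E →L[ℝ] ℝ} {x y : E} {c : ℝ} (hu : HasFDerivAt u L y) (hxy : x ≠ y)
    (hms : ∀ l ∈ Ioo 0 ‖y - x‖,
      (l / ‖y - x‖) ^ c * u (x + (l ^ 2 / ‖y - x‖ ^ 2) • (y - x)) ≤ u y) :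
    0 ≤ c * u y + 2 * L (y - x) := by
  set r := ‖y - x‖
  have hr : 0 < r := norm_pos_iff.2 (sub_ne_zero.2 hxy.symm)
  have hreflect : x + (r ^ 2 / r ^ 2) • (y - x) = y := by
    rw [div_self (by positivity), one_smul, add_sub_cancel]
  have hpath : HasDerivAt (fun l : ℝ => x + (l ^ 2 / r ^ 2) • (y - x))
      ((2 * r / r ^ 2) • (y - x)) r := by
    simpa using (((hasDerivAt_pow 2 r).div_const (r ^ 2)).smul_const (y - x)).const_add x
  have hscale : HasDerivAt (fun l : ℝ => (l / r) ^ c) (c / r) r :=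
    (((hasDerivAt_id r).div_const r).rpow_const (Or.inl (by simp [hr.ne']))).congr_deriv <| by
      rw [id_eq, div_self hr.ne', Real.one_rpow]
      ring
  have hg : HasDerivAt (fun l : ℝ => (l / r) ^ c * u (x + (l ^ 2 / r ^ 2) • (y - x)))
      ((c * u y + 2 * L (y - x)) / r) r :=
    (hscale.mul ((hreflect ▸ hu).comp_hasDerivAt r hpath)).congr_deriv <| by
      simp only [hreflect, div_self hr.ne', Real.one_rpow, map_smul, smul_eq_mul]
      field_simp
  have hderiv := hg.nonneg_of_forall_le_left hr fun l hl => by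
    simpa only [hreflect, div_self hr.ne', Real.one_rpow, one_mul] using hms l hl
  exact (div_nonneg_iff.1 hderiv).elim And.left fun h => absurd h.2 hr.not_ge

theorem ContinuousLinearMap.opNorm_le_of_forall_unit_neg_le {E : Type*} [NormedAddCommGroup E]
    [NormedSpace ℝ E] [Nontrivial E] {L : E →L[ℝ] ℝ} {M : ℝ} (h : ∀ e, ‖e‖ = 1 → -M ≤ L e) :
    ‖L‖ ≤ M := by
  have habs : ∀ e, ‖e‖ = 1 → ‖L e‖ ≤ M := fun e he => by
    have hneg := h (-e) (by rwa [norm_neg])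
    rw [map_neg] at hneg
    exact abs_le.2 ⟨h e he, by linarith⟩
  obtain ⟨e, he⟩ := exists_norm_eq E zero_le_one
  exact opNorm_le_of_unit_norm ((norm_nonneg _).trans (habs e he)) habs

theorem stmt_13_general (n : ℕ) (σ : ℝ) (ε : ℝ) (hε1 : ε ≤ 1)
    (u : EuclideanSpace ℝ (Fin n) → ℝ)
    (hC1 : ContDiffOn ℝ 1 u ({x : EuclideanSpace ℝ (Fin n) | ‖x‖ < 1} \ {0}))
    (hms : ∀ x : EuclideanSpace ℝ (Fin n), 0 < ‖x‖ → ‖x‖ ≤ ε / 2 →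
      ∀ lam : ℝ, 0 < lam → lam < ‖x‖ →
        ∀ y : EuclideanSpace ℝ (Fin n), lam ≤ ‖y - x‖ → 0 < ‖y‖ → ‖y‖ ≤ 1 →
          (lam / ‖y - x‖) ^ ((n : ℝ) - 2 * σ) *
              u (x + (lam ^ 2 / ‖y - x‖ ^ 2) • (y - x)) ≤ u y) :
    ∀ x : EuclideanSpace ℝ (Fin n), 0 < ‖x‖ → ‖x‖ < ε / 4 →
      ‖fderiv ℝ u x‖ ≤ (((n : ℝ) - 2 * σ) / ‖x‖) * u x := by
  intro p hp0 hp
  have hp1 : ‖p‖ < 1 := by linarith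
  have hpne : p ≠ 0 := norm_pos_iff.1 hp0
  have hu : HasFDerivAt u (fderiv ℝ u p) p := by
    have hopen : IsOpen ({x : EuclideanSpace ℝ (Fin n) | ‖x‖ < 1} \ {0}) :=
      (isOpen_lt continuous_norm continuous_const).sdiff isClosed_singleton
    exact ((hC1.contDiffAt (hopen.mem_nhds ⟨hp1, hpne⟩)).differentiableAt one_ne_zero).hasFDerivAt
  have : Nontrivial (EuclideanSpace ℝ (Fin n)) := nontrivial_of_ne p 0 hpne
  refine ContinuousLinearMap.opNorm_le_of_forall_unit_neg_le fun e he => ?_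
  set x := p - (‖p‖ / 2) • e
  have hshift : ‖(‖p‖ / 2) • e‖ = ‖p‖ / 2 := by
    rw [norm_smul, he, mul_one, Real.norm_of_nonneg (by positivity)]
  have hpx : p - x = (‖p‖ / 2) • e := sub_sub_cancel _ _
  have hx_lo : ‖p‖ / 2 ≤ ‖x‖ := by linarith [norm_sub_norm_le p ((‖p‖ / 2) • e)]
  have hx_hi : ‖x‖ ≤ ε / 2 := by linarith [norm_sub_le p ((‖p‖ / 2) • e)]
  have hnpx : ‖p - x‖ = ‖p‖ / 2 := hpx ▸ hshift
  have hxp : x ≠ p := fun h => by rw [h, sub_self, norm_zero] at hnpx; linarith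
  have hsign := hu.nonneg_of_moving_sphere hxp fun l hl =>
    hms x (by linarith) hx_hi l hl.1 (by linarith [hl.2]) p hl.2.le hp0 hp1.le
  rw [hpx, map_smul, smul_eq_mul] at hsign
  have hdiv : ((n : ℝ) - 2 * σ) / ‖p‖ * u p + fderiv ℝ u p e
      = (((n : ℝ) - 2 * σ) * u p + 2 * (‖p‖ / 2 * fderiv ℝ u p e)) / ‖p‖ := by
    field_simp
  linarith [div_nonneg hsign hp0.le]

/-- The moving-sphere inequalities imply the gradient estimate
`|∇u(x)| ≤ ((n-2σ)/|x|) u(x)` for `0 < |x| < ε/4`. -/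
theorem stmt_13 (n : ℕ) (hn : 2 ≤ n) (σ : ℝ) (hσ : σ ∈ Set.Ioo (0 : ℝ) 1)
    (ε : ℝ) (hε : 0 < ε) (hε1 : ε ≤ 1)
    (u : EuclideanSpace ℝ (Fin n) → ℝ)
    (hpos : ∀ x : EuclideanSpace ℝ (Fin n), ‖x‖ < 1 → x ≠ 0 → 0 < u x)
    (hC1 : ContDiffOn ℝ 1 u ({x : EuclideanSpace ℝ (Fin n) | ‖x‖ < 1} \ {0}))
    (hms : ∀ x : EuclideanSpace ℝ (Fin n), 0 < ‖x‖ → ‖x‖ ≤ ε / 2 →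
      ∀ lam : ℝ, 0 < lam → lam < ‖x‖ →
        ∀ y : EuclideanSpace ℝ (Fin n), lam ≤ ‖y - x‖ → 0 < ‖y‖ → ‖y‖ ≤ 1 →
          (lam / ‖y - x‖) ^ ((n : ℝ) - 2 * σ) *
              u (x + (lam ^ 2 / ‖y - x‖ ^ 2) • (y - x)) ≤ u y) :
    ∀ x : EuclideanSpace ℝ (Fin n), 0 < ‖x‖ → ‖x‖ < ε / 4 →
      ‖fderiv ℝ u x‖ ≤ (((n : ℝ) - 2 * σ) / ‖x‖) * u x :=
  stmt_13_general n σ ε hε1 u hC1 hms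
end

section
/- Let n ≥ 2 be an integer and σ ∈ (0,1). Let Ω ⊂ ℝ^{n+1}_+ be open and let U be a C² function on Ω satisfying ΔU(X) + ((1−2σ)/t)·∂_t U(X) = 0 for all X = (x,t) ∈ Ω. Fix x̄ ∈ ℝⁿ and λ > 0, set X̄ = (x̄, 0), and define the inversion I(ξ) = X̄ + λ²(ξ − X̄)/|ξ − X̄|² (which maps ℝ^{n+1}_+ \ {X̄} to itself, since X̄ lies on the boundary hyperplane {t = 0}) and the Kelvin transform U_{X̄,λ}(ξ) := (λ/|ξ − X̄|)^{n−2σ} · U(I(ξ)). Then U_{X̄,λ} satisfies the same degenerate equation Δ U_{X̄,λ}(ξ) + ((1−2σ)/s)·∂_s U_{X̄,λ}(ξ) = 0 for all ξ = (y,s) in the open set {ξ ∈ ℝ^{n+1}_+ : ξ ≠ X̄, I(ξ) ∈ Ω}. -/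
open scoped Topology MeasureTheory RealInnerProductSpace
open Filter MeasureTheory

noncomputable section

/-- The inversion of `ℝ^{n+1}_+` with respect to the sphere of radius `lam` centered at
`X̄ = (x̄, 0)` on the boundary hyperplane. -/
def inversion {n : ℕ} (xb : EuclideanSpace ℝ (Fin n)) (lam : ℝ) (ξ : Pt n) : Pt n :=
  ((xb, (0 : ℝ)) : Pt n) + (lam ^ 2 / enorm' (ξ - (xb, (0 : ℝ))) ^ 2) • (ξ - (xb, (0 : ℝ)))

/-- The Kelvin transform `U_{X̄,λ}(ξ) = (λ/|ξ-X̄|)^{n-2σ} U(X̄ + λ²(ξ-X̄)/|ξ-X̄|²)`. -/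
def kelvin {n : ℕ} (σ : ℝ) (U : Pt n → ℝ) (xb : EuclideanSpace ℝ (Fin n)) (lam : ℝ)
    (ξ : Pt n) : ℝ :=
  (lam / enorm' (ξ - (xb, (0 : ℝ)))) ^ ((n : ℝ) - 2 * σ) * U (inversion xb lam ξ)

/-! With `q = |ξ - X̄|²` and `m = n - 2σ`, the Kelvin transform is `λ^m q^(-m/2) · (U ∘ I)`.
The differential of the inversion `I` is `λ²/q` times the reflection in `(ξ - X̄)⊥`, so
`Δ(U ∘ I) = (λ²/q)² (ΔU) ∘ I - 2(n-1) λ² q⁻² ⟨(∇U) ∘ I, ξ - X̄⟩`, while in dimension `n + 1`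
`Δ q^(-m/2) = m (1 - 2σ) q^(-m/2-1)`. By the product rule
`Δ U_{X̄,λ} = λ^(m+4) q^(-m/2-2) (ΔU) ∘ I + (1 - 2σ) R` with a first-order remainder `R`, and
`(1-2σ)/s · ∂_s U_{X̄,λ} = λ^(m+4) q^(-m/2-2) (1-2σ)/I(ξ)_t · (∂_t U) ∘ I - (1 - 2σ) R`,
because an inversion centred on `{t = 0}` sends the height `s` to `I(ξ)_t = λ² s / q`. -/

section SecondDerivative

variable {𝕜 : Type*} [NontriviallyNormedField 𝕜]
  {E F G : Type*} [NormedAddCommGroup E] [NormedSpace 𝕜 E] [NormedAddCommGroup F]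
  [NormedSpace 𝕜 F] [NormedAddCommGroup G] [NormedSpace 𝕜 G] {x : E}

lemma ContDiffAt.differentiableAt_fderiv {f : E → F} (hf : ContDiffAt 𝕜 2 f x) :
    DifferentiableAt 𝕜 (fderiv 𝕜 f) x :=
  (hf.fderiv_right (m := 1) le_rfl).differentiableAt one_ne_zero

lemma ContDiffAt.eventually_differentiableAt {f : E → F} (hf : ContDiffAt 𝕜 2 f x) :
    ∀ᶠ y in 𝓝 x, DifferentiableAt 𝕜 f y :=
  (hf.eventually (by simp)).mono fun _ hy => hy.differentiableAt two_ne_zero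

lemma fderiv_fun_fderiv_apply {f : E → F} (hf : DifferentiableAt 𝕜 (fderiv 𝕜 f) x)
    (v w : E) :
    fderiv 𝕜 (fun y => fderiv 𝕜 f y v) x w = fderiv 𝕜 (fderiv 𝕜 f) x w v := by
  rw [fderiv_clm_apply hf (differentiableAt_const v)]
  simp

lemma fderiv_fderiv_smul_apply {f : E → 𝕜} {g : E → F} (hf : ContDiffAt 𝕜 2 f x)
    (hg : ContDiffAt 𝕜 2 g x) (v w : E) :
    fderiv 𝕜 (fderiv 𝕜 (fun y => f y • g y)) x v w =
      fderiv 𝕜 (fderiv 𝕜 f) x v w • g x + fderiv 𝕜 f x w • fderiv 𝕜 g x v +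
        fderiv 𝕜 f x v • fderiv 𝕜 g x w + f x • fderiv 𝕜 (fderiv 𝕜 g) x v w := by
  have hfg : (fun y => fderiv 𝕜 (fun y => f y • g y) y w) =ᶠ[𝓝 x]
      fun y => f y • fderiv 𝕜 g y w + fderiv 𝕜 f y w • g y := by
    filter_upwards [hf.eventually_differentiableAt, hg.eventually_differentiableAt]
      with y hfy hgy
    rw [fderiv_fun_smul hfy hgy]
    simp
  rw [← fderiv_fun_fderiv_apply (f := fun y => f y • g y) (hf.smul hg).differentiableAt_fderiv
    w v, hfg.fderiv_eq]
  have hf' : DifferentiableAt 𝕜 (fun y => fderiv 𝕜 f y w) x :=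
    hf.differentiableAt_fderiv.clm_apply (differentiableAt_const w)
  have hg' : DifferentiableAt 𝕜 (fun y => fderiv 𝕜 g y w) x :=
    hg.differentiableAt_fderiv.clm_apply (differentiableAt_const w)
  have hf1 := hf.differentiableAt two_ne_zero
  have hg1 := hg.differentiableAt two_ne_zero
  rw [((hf1.hasFDerivAt.fun_smul hg'.hasFDerivAt).fun_add
    (hf'.hasFDerivAt.fun_smul hg1.hasFDerivAt)).fderiv]
  simp only [add_apply, smul_apply, ContinuousLinearMap.smulRight_apply]
  rw [fderiv_fun_fderiv_apply hf.differentiableAt_fderiv,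
    fderiv_fun_fderiv_apply hg.differentiableAt_fderiv]
  abel

lemma fderiv_fderiv_comp_apply {U : F → G} {g : E → F} (hU : ContDiffAt 𝕜 2 U (g x))
    (hg : ContDiffAt 𝕜 2 g x) (v w : E) :
    fderiv 𝕜 (fderiv 𝕜 (fun y => U (g y))) x v w =
      fderiv 𝕜 (fderiv 𝕜 U) (g x) (fderiv 𝕜 g x v) (fderiv 𝕜 g x w) +
        fderiv 𝕜 U (g x) (fderiv 𝕜 (fderiv 𝕜 g) x v w) := by
  have hUg : (fun y => fderiv 𝕜 (fun y => U (g y)) y w) =ᶠ[𝓝 x]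
      fun y => fderiv 𝕜 U (g y) (fderiv 𝕜 g y w) := by
    filter_upwards [hg.continuousAt.eventually hU.eventually_differentiableAt,
      hg.eventually_differentiableAt] with y hUy hgy
    exact congrArg (· w) (hUy.hasFDerivAt.comp y hgy.hasFDerivAt).fderiv
  rw [← fderiv_fun_fderiv_apply (f := fun y => U (g y)) (hU.comp x hg).differentiableAt_fderiv
    w v, hUg.fderiv_eq]
  have hU' : DifferentiableAt 𝕜 (fun y => fderiv 𝕜 U (g y)) x :=
    hU.differentiableAt_fderiv.comp x (hg.differentiableAt two_ne_zero)
  have hg' : DifferentiableAt 𝕜 (fun y => fderiv 𝕜 g y w) x :=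
    hg.differentiableAt_fderiv.clm_apply (differentiableAt_const w)
  have hU'' : fderiv 𝕜 (fun y => fderiv 𝕜 U (g y)) x =
      (fderiv 𝕜 (fderiv 𝕜 U) (g x)).comp (fderiv 𝕜 g x) :=
    fderiv_comp x hU.differentiableAt_fderiv (hg.differentiableAt two_ne_zero)
  rw [fderiv_clm_apply hU' hg', hU'']
  simp only [add_apply, ContinuousLinearMap.comp_apply, ContinuousLinearMap.flip_apply]
  rw [fderiv_fun_fderiv_apply hg.differentiableAt_fderiv]
  abel

end SecondDerivative

namespace Pt

variable {n : ℕ}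

/-- The Euclidean inner product of `ℝ^{n+1}`; the norm carried by the product type `Pt n` is the
sup norm, so `inner` is not available on it. -/
def dot (a b : Pt n) : ℝ := ⟪a.1, b.1⟫ + a.2 * b.2

def dotL (a : Pt n) : Pt n →L[ℝ] ℝ :=
  (innerSL ℝ a.1).comp (ContinuousLinearMap.fst ℝ _ ℝ) +
    a.2 • ContinuousLinearMap.snd ℝ _ ℝ

@[simp] lemma dotL_apply (a b : Pt n) : dotL a b = dot a b := by
  simp [dotL, dot]

lemma dot_comm (a b : Pt n) : dot a b = dot b a := by
  rw [dot, dot, real_inner_comm, mul_comm]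

lemma dot_self_eq (a : Pt n) : dot a a = ‖a.1‖ ^ 2 + a.2 ^ 2 := by
  rw [dot, real_inner_self_eq_norm_sq]
  ring

lemma dot_self_nonneg (a : Pt n) : 0 ≤ dot a a := by
  rw [dot_self_eq]
  positivity

lemma enorm'_eq_sqrt_dot (a : Pt n) : enorm' a = √(dot a a) := by
  rw [enorm', dot_self_eq]

lemma dot_self_pos {a : Pt n} (ha : a ≠ 0) : 0 < dot a a := by
  obtain ⟨x, t⟩ := a
  rw [dot_self_eq]
  rcases eq_or_ne x 0 with rfl | hx
  · have ht : t ≠ 0 := by rintro rfl; exact ha rfl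
    positivity
  · have := norm_pos_iff.mpr hx
    positivity

lemma hasFDerivAt_dot_sub_const (c w Y : Pt n) :
    HasFDerivAt (fun Y => dot (Y - c) w) (dotL w) Y := by
  have h := ((dotL w).hasFDerivAt (x := Y)).sub_const (dotL w c)
  have hdot : (fun Y => dot (Y - c) w) = fun Y => dotL w Y - dotL w c := by
    funext Y
    simp only [dotL_apply, dot, Prod.fst_sub, Prod.snd_sub, real_inner_comm w.1,
      inner_sub_right]
    ring
  rwa [hdot]

def sqDist (c Y : Pt n) : ℝ := dot (Y - c) (Y - c)

lemma sqDist_eq (c Y : Pt n) : sqDist c Y = ‖Y.1 - c.1‖ ^ 2 + (Y.2 - c.2) ^ 2 :=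
  dot_self_eq _

lemma contDiff_sqDist (c : Pt n) {k : WithTop ℕ∞} : ContDiff ℝ k (sqDist c) := by
  rw [funext (sqDist_eq c)]
  exact ((contDiff_fst.sub contDiff_const).norm_sq ℝ).add
    ((contDiff_snd.sub contDiff_const).pow 2)

lemma hasFDerivAt_sqDist (c Y : Pt n) :
    HasFDerivAt (sqDist c) ((2 : ℝ) • dotL (Y - c)) Y := by
  have h := (((hasFDerivAt_fst (p := Y)).sub_const c.1).norm_sq).fun_add
    (((hasFDerivAt_snd (p := Y)).sub_const c.2).pow 2)
  rw [← funext (sqDist_eq c)] at h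
  refine h.congr_fderiv (ContinuousLinearMap.ext fun w => ?_)
  simp only [map_sub, ContinuousLinearMap.sub_comp, Nat.add_one_sub_one, pow_one, nsmul_eq_mul,
    Nat.cast_ofNat, add_apply, smul_apply, sub_apply, ContinuousLinearMap.comp_apply,
    ContinuousLinearMap.coe_fst', coe_innerSL_apply, real_inner_comm w.1,
    ContinuousLinearMap.coe_snd', smul_eq_mul, dotL_apply, dot, Prod.fst_sub, inner_sub_right,
    Prod.snd_sub]
  ring

section Power

variable (c : Pt n) (p : ℝ) {X : Pt n}

lemma hasFDerivAt_sqDist_rpow (hX : sqDist c X ≠ 0) :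
    HasFDerivAt (fun Y => sqDist c Y ^ p)
      ((2 * p * sqDist c X ^ (p - 1)) • dotL (X - c)) X := by
  refine ((hasFDerivAt_sqDist c X).rpow_const (p := p) (Or.inl hX)).congr_fderiv ?_
  rw [smul_smul]
  ring_nf

lemma contDiffAt_sqDist_rpow (hX : sqDist c X ≠ 0) {k : WithTop ℕ∞} :
    ContDiffAt ℝ k (fun Y => sqDist c Y ^ p) X :=
  (contDiff_sqDist c).contDiffAt.rpow_const_of_ne hX

lemma fderiv_sqDist_rpow_apply (hX : sqDist c X ≠ 0) (v : Pt n) :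
    fderiv ℝ (fun Y => sqDist c Y ^ p) X v =
      2 * p * (sqDist c X ^ p / sqDist c X) * dot (X - c) v := by
  rw [(hasFDerivAt_sqDist_rpow c p hX).fderiv, Real.rpow_sub_one hX]
  simp

lemma fderiv_fderiv_sqDist_rpow_apply (hX : sqDist c X ≠ 0) (v w : Pt n) :
    fderiv ℝ (fderiv ℝ (fun Y => sqDist c Y ^ p)) X v w =
      4 * p * (p - 1) * (sqDist c X ^ p / sqDist c X ^ 2) * (dot (X - c) v * dot (X - c) w) +
        2 * p * (sqDist c X ^ p / sqDist c X) * dot v w := by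
  have hne : ∀ᶠ Y in 𝓝 X, sqDist c Y ≠ 0 :=
    (contDiff_sqDist c (k := 0)).continuous.continuousAt.eventually_ne hX
  have hD : (fun Y => fderiv ℝ (fun Y => sqDist c Y ^ p) Y w) =ᶠ[𝓝 X]
      fun Y => 2 * p * sqDist c Y ^ (p - 1) * dot (Y - c) w := by
    filter_upwards [hne] with Y hY
    rw [(hasFDerivAt_sqDist_rpow c p hY).fderiv]
    simp
  rw [← fderiv_fun_fderiv_apply (contDiffAt_sqDist_rpow c p hX).differentiableAt_fderiv w v,
    hD.fderiv_eq, (((hasFDerivAt_sqDist_rpow c (p - 1) hX).const_mul (2 * p)).fun_mul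
      (hasFDerivAt_dot_sub_const c w X)).fderiv]
  simp only [add_apply, smul_apply, dotL_apply, smul_eq_mul]
  rw [Real.rpow_sub_one hX, Real.rpow_sub_one hX, Real.rpow_sub_one hX, dot_comm w v]
  field_simp
  ring

end Power

def basisSum (Q : Pt n → ℝ) : ℝ :=
  ∑ i : Fin n, Q (EuclideanSpace.single i 1, 0) + Q (0, 1)

lemma lapl_eq_basisSum (U : Pt n → ℝ) (X : Pt n) :
    lapl U X = basisSum (fun v => d2 U X v) := rfl

lemma basisSum_add (Q R : Pt n → ℝ) :
    basisSum (fun v => Q v + R v) = basisSum Q + basisSum R := by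
  simp only [basisSum, Finset.sum_add_distrib]
  ring

lemma basisSum_const_mul (a : ℝ) (Q : Pt n → ℝ) :
    basisSum (fun v => a * Q v) = a * basisSum Q := by
  simp only [basisSum, ← Finset.mul_sum]
  ring

lemma basisSum_dot_mul (z : Pt n) (L : Pt n →L[ℝ] ℝ) :
    basisSum (fun v => dot z v * L v) = L z := by
  have hz : z =
      (∑ i : Fin n, z.1 i • (EuclideanSpace.single i 1, 0)) + z.2 • ((0, 1) : Pt n) := by
    refine Prod.ext ?_ (by simp [Prod.snd_sum])
    simpa [Prod.fst_sum] using ((EuclideanSpace.basisFun (Fin n) ℝ).sum_repr z.1).symm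
  conv_rhs => rw [hz]
  rw [map_add, map_sum]
  simp only [map_smul, smul_eq_mul]
  simp [basisSum, dot, EuclideanSpace.inner_single_right]

lemma basisSum_dot_mul_dot (z w : Pt n) :
    basisSum (fun v => dot z v * dot w v) = dot z w := by
  simpa [dot_comm w z] using basisSum_dot_mul z (dotL w)

lemma basisSum_dot_self : basisSum (fun v : Pt n => dot v v) = n + 1 := by
  simp [basisSum, dot]

lemma basisSum_bilin_smul_add_smul (H : Pt n →L[ℝ] Pt n →L[ℝ] ℝ) (z : Pt n) (a b : ℝ) :
    basisSum (fun v => H (a • v + (b * dot z v) • z) (a • v + (b * dot z v) • z)) =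
      a ^ 2 * basisSum (fun v => H v v) + (2 * a * b + b ^ 2 * dot z z) * H z z := by
  have hexp : ∀ v, H (a • v + (b * dot z v) • z) (a • v + (b * dot z v) • z) =
      a ^ 2 * H v v + (a * b) * (dot z v * H.flip z v) + (a * b) * (dot z v * H z v) +
        (b ^ 2 * H z z) * (dot z v * dot z v) := by
    intro v
    simp only [map_add, map_smul, add_apply, smul_apply, smul_eq_mul,
      ContinuousLinearMap.flip_apply]
    ring
  simp only [hexp, basisSum_add, basisSum_const_mul, basisSum_dot_mul, basisSum_dot_mul_dot]
  rw [ContinuousLinearMap.flip_apply]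
  ring

lemma lapl_eq_basisSum_fderiv_fderiv {U : Pt n → ℝ} {X : Pt n} (hU : ContDiffAt ℝ 2 U X) :
    lapl U X = basisSum (fun v => fderiv ℝ (fderiv ℝ U) X v v) := by
  simp only [lapl_eq_basisSum, d2, fderiv_fun_fderiv_apply hU.differentiableAt_fderiv]

lemma lapl_const_mul (a : ℝ) (U : Pt n → ℝ) (X : Pt n) :
    lapl (fun Y => a * U Y) X = a * lapl U X := by
  have hd2 : ∀ v, d2 (fun Y => a * U Y) X v = a * d2 U X v := fun v => by
    change fderiv ℝ (fun Y => fderiv ℝ (a • U) Y v) X v = _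
    rw [fderiv_const_smul_field]
    change fderiv ℝ (a • fun Y => fderiv ℝ U Y v) X v = _
    rw [fderiv_const_smul_field]
    rfl
  simp only [lapl_eq_basisSum, hd2, basisSum_const_mul]

lemma lapl_mul {f g : Pt n → ℝ} {X : Pt n} (hf : ContDiffAt ℝ 2 f X)
    (hg : ContDiffAt ℝ 2 g X) :
    lapl (fun Y => f Y * g Y) X =
      lapl f X * g X + 2 * basisSum (fun v => fderiv ℝ f X v * fderiv ℝ g X v) +
        f X * lapl g X := by
  have hfg : ∀ v, fderiv ℝ (fderiv ℝ (fun Y => f Y * g Y)) X v v =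
      g X * fderiv ℝ (fderiv ℝ f) X v v + 2 * (fderiv ℝ f X v * fderiv ℝ g X v) +
        f X * fderiv ℝ (fderiv ℝ g) X v v := fun v => by
    have := fderiv_fderiv_smul_apply hf hg v v
    simp only [smul_eq_mul] at this
    rw [this]
    ring
  rw [lapl_eq_basisSum_fderiv_fderiv (hf.mul hg), lapl_eq_basisSum_fderiv_fderiv hf,
    lapl_eq_basisSum_fderiv_fderiv hg]
  simp only [hfg, basisSum_add, basisSum_const_mul]
  ring

lemma lapl_sqDist_rpow (c : Pt n) (p : ℝ) {X : Pt n} (hX : sqDist c X ≠ 0) :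
    lapl (fun Y => sqDist c Y ^ p) X =
      2 * p * (2 * p + n - 1) * (sqDist c X ^ p / sqDist c X) := by
  have hzz : dot (X - c) (X - c) = sqDist c X := rfl
  rw [lapl_eq_basisSum_fderiv_fderiv (contDiffAt_sqDist_rpow c p hX)]
  simp only [fderiv_fderiv_sqDist_rpow_apply c p hX, basisSum_add, basisSum_const_mul,
    basisSum_dot_mul_dot, basisSum_dot_self, hzz]
  field_simp
  ring

lemma sqDist_ne_zero {c X : Pt n} (h : X ≠ c) : sqDist c X ≠ 0 :=
  (dot_self_pos (sub_ne_zero.mpr h)).ne'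

section Inversion

variable (xb : EuclideanSpace ℝ (Fin n)) (lam : ℝ) {X : Pt n}

lemma inversion_eq_rpow_smul : inversion xb lam =
    fun Y => ((xb, 0) : Pt n) + sqDist (xb, 0) Y ^ (-1 : ℝ) • lam ^ 2 • (Y - (xb, 0)) := by
  funext Y
  rw [inversion, enorm'_eq_sqrt_dot, Real.sq_sqrt (dot_self_nonneg _), Real.rpow_neg_one,
    smul_smul, div_eq_inv_mul]
  rfl

lemma contDiffAt_inversion (hX : X ≠ (xb, 0)) {k : WithTop ℕ∞} :
    ContDiffAt ℝ k (inversion xb lam) X := by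
  rw [inversion_eq_rpow_smul]
  exact contDiffAt_const.add ((contDiffAt_sqDist_rpow _ _ (sqDist_ne_zero hX)).smul
    (by fun_prop))

lemma hasFDerivAt_smul_sub_const (a : ℝ) (c Y : Pt n) :
    HasFDerivAt (fun Y => a • (Y - c)) (a • ContinuousLinearMap.id ℝ (Pt n)) Y :=
  ((hasFDerivAt_id Y).sub_const c).const_smul a

lemma fderiv_inversion_apply (hX : X ≠ (xb, 0)) (v : Pt n) :
    fderiv ℝ (inversion xb lam) X v =
      (lam ^ 2 / sqDist (xb, 0) X) • v +
        (-(2 * lam ^ 2 / sqDist (xb, 0) X ^ 2) * dot (X - (xb, 0)) v) • (X - (xb, 0)) := by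
  have hq := sqDist_ne_zero hX
  rw [inversion_eq_rpow_smul, fderiv_const_add,
    ((hasFDerivAt_sqDist_rpow _ (-1) hq).fun_smul
      (hasFDerivAt_smul_sub_const (lam ^ 2) _ X)).fderiv]
  simp only [add_apply, smul_apply, ContinuousLinearMap.smulRight_apply, dotL_apply,
    ContinuousLinearMap.id_apply, Real.rpow_sub_one hq, Real.rpow_neg_one, smul_smul, smul_eq_mul]
  match_scalars <;> field_simp

lemma fderiv_fderiv_inversion_apply (hX : X ≠ (xb, 0)) (v w : Pt n) :
    fderiv ℝ (fderiv ℝ (inversion xb lam)) X v w =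
      (lam ^ 2 * (8 / sqDist (xb, 0) X ^ 3 * (dot (X - (xb, 0)) v * dot (X - (xb, 0)) w) -
          2 / sqDist (xb, 0) X ^ 2 * dot v w)) • (X - (xb, 0)) -
        (2 * lam ^ 2 / sqDist (xb, 0) X ^ 2 * dot (X - (xb, 0)) w) • v -
        (2 * lam ^ 2 / sqDist (xb, 0) X ^ 2 * dot (X - (xb, 0)) v) • w := by
  have hq := sqDist_ne_zero hX
  have hg : fderiv ℝ (fun Y : Pt n => lam ^ 2 • (Y - (xb, 0))) =
      fun _ => lam ^ 2 • ContinuousLinearMap.id ℝ (Pt n) :=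
    funext fun Y => (hasFDerivAt_smul_sub_const _ _ Y).fderiv
  have hconst : fderiv ℝ (inversion xb lam) =
      fderiv ℝ (fun Y => sqDist (xb, 0) Y ^ (-1 : ℝ) • lam ^ 2 • (Y - (xb, 0))) := by
    rw [inversion_eq_rpow_smul]
    exact funext fun Y => fderiv_const_add _
  rw [hconst, fderiv_fderiv_smul_apply (contDiffAt_sqDist_rpow _ _ hq) (by fun_prop), hg,
    fderiv_fderiv_sqDist_rpow_apply _ _ hq, fderiv_sqDist_rpow_apply _ _ hq,
    fderiv_sqDist_rpow_apply _ _ hq]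
  simp only [fderiv_const_apply, zero_apply, smul_zero, add_zero, smul_apply,
    ContinuousLinearMap.id_apply, Real.rpow_neg_one, smul_smul]
  match_scalars <;> field_simp <;> ring

lemma inversion_snd (X : Pt n) :
    (inversion xb lam X).2 = lam ^ 2 / sqDist (xb, 0) X * X.2 := by
  rw [inversion_eq_rpow_smul]
  simp [Real.rpow_neg_one, div_eq_inv_mul, mul_assoc]

variable {xb lam}

lemma fderiv_comp_inversion_apply {U : Pt n → ℝ}
    (hU : DifferentiableAt ℝ U (inversion xb lam X)) (hX : X ≠ (xb, 0)) (v : Pt n) :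
    fderiv ℝ (fun Y => U (inversion xb lam Y)) X v =
      lam ^ 2 / sqDist (xb, 0) X * fderiv ℝ U (inversion xb lam X) v -
        2 * lam ^ 2 / sqDist (xb, 0) X ^ 2 * dot (X - (xb, 0)) v *
          fderiv ℝ U (inversion xb lam X) (X - (xb, 0)) := by
  have hI := (contDiffAt_inversion xb lam hX (k := 1)).differentiableAt one_ne_zero
  rw [show (fun Y => U (inversion xb lam Y)) = U ∘ inversion xb lam from rfl,
    (hU.hasFDerivAt.comp X hI.hasFDerivAt).fderiv, ContinuousLinearMap.comp_apply,
    fderiv_inversion_apply xb lam hX]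
  simp only [map_add, map_smul, smul_eq_mul]
  ring

lemma lapl_comp_inversion {U : Pt n → ℝ} (hU : ContDiffAt ℝ 2 U (inversion xb lam X))
    (hX : X ≠ (xb, 0)) :
    lapl (fun Y => U (inversion xb lam Y)) X =
      (lam ^ 2 / sqDist (xb, 0) X) ^ 2 * lapl U (inversion xb lam X) -
        2 * (n - 1) * lam ^ 2 / sqDist (xb, 0) X ^ 2 *
          fderiv ℝ U (inversion xb lam X) (X - (xb, 0)) := by
  set q := sqDist (xb, 0) X with hq_def
  set z := X - (xb, 0) with hz_def
  set L := fderiv ℝ U (inversion xb lam X) with hL_def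
  set H := fderiv ℝ (fderiv ℝ U) (inversion xb lam X) with hH_def
  have hq : q ≠ 0 := sqDist_ne_zero hX
  have hzz : dot z z = q := rfl
  have hsum : ∀ v, fderiv ℝ (fderiv ℝ (fun Y => U (inversion xb lam Y))) X v v =
      H ((lam ^ 2 / q) • v + (-(2 * lam ^ 2 / q ^ 2) * dot z v) • z)
          ((lam ^ 2 / q) • v + (-(2 * lam ^ 2 / q ^ 2) * dot z v) • z) +
        (8 * lam ^ 2 / q ^ 3 * L z) * (dot z v * dot z v) +
        (-(2 * lam ^ 2 / q ^ 2) * L z) * dot v v + (-(4 * lam ^ 2 / q ^ 2)) * (dot z v * L v) :=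
      fun v => by
    rw [fderiv_fderiv_comp_apply hU (contDiffAt_inversion xb lam hX),
      fderiv_inversion_apply xb lam hX, fderiv_fderiv_inversion_apply xb lam hX]
    simp only [← hq_def, ← hz_def, ← hL_def, ← hH_def]
    simp only [map_sub, map_smul, smul_eq_mul]
    ring
  -- `basisSum_bilin_smul_add_smul` with `2ab + b²q = 0`: the reflection preserves the trace.
  rw [lapl_eq_basisSum_fderiv_fderiv (U := fun Y => U (inversion xb lam Y))
      (hU.comp X (contDiffAt_inversion xb lam hX)),
    lapl_eq_basisSum_fderiv_fderiv hU]
  simp only [hsum, basisSum_add, basisSum_const_mul, basisSum_bilin_smul_add_smul,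
    basisSum_dot_mul_dot, basisSum_dot_self, basisSum_dot_mul, hzz, ← hH_def]
  field_simp
  ring

end Inversion

section Kelvin

variable (σ : ℝ) (U : Pt n → ℝ) {xb : EuclideanSpace ℝ (Fin n)} {lam : ℝ} {X : Pt n}

lemma kelvin_eq_mul_rpow (hlam : 0 ≤ lam) : kelvin σ U xb lam = fun Y =>
    lam ^ ((n : ℝ) - 2 * σ) *
      (sqDist (xb, 0) Y ^ (-((n : ℝ) - 2 * σ) / 2) * U (inversion xb lam Y)) := by
  funext Y
  have hq := dot_self_nonneg (Y - (xb, 0))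
  rw [kelvin, enorm'_eq_sqrt_dot, Real.div_rpow hlam (Real.sqrt_nonneg _), Real.sqrt_eq_rpow,
    ← Real.rpow_mul hq, sqDist,
    show -((n : ℝ) - 2 * σ) / 2 = -(1 / 2 * ((n : ℝ) - 2 * σ)) by ring, Real.rpow_neg hq]
  ring

variable {U}

lemma fderiv_kelvin_apply (hlam : 0 ≤ lam) (hX : X ≠ (xb, 0))
    (hU : DifferentiableAt ℝ U (inversion xb lam X)) (w : Pt n) :
    fderiv ℝ (kelvin σ U xb lam) X w =
      lam ^ ((n : ℝ) - 2 * σ) *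
        (sqDist (xb, 0) X ^ (-((n : ℝ) - 2 * σ) / 2) / sqDist (xb, 0) X ^ 2) *
        (lam ^ 2 * sqDist (xb, 0) X * fderiv ℝ U (inversion xb lam X) w -
          ((n : ℝ) - 2 * σ) * sqDist (xb, 0) X * dot (X - (xb, 0)) w * U (inversion xb lam X) -
          2 * lam ^ 2 * dot (X - (xb, 0)) w * fderiv ℝ U (inversion xb lam X) (X - (xb, 0))) := by
  have hq := sqDist_ne_zero hX
  have hI := (contDiffAt_inversion xb lam hX (k := 1)).differentiableAt one_ne_zero
  have hUI : DifferentiableAt ℝ (fun Y => U (inversion xb lam Y)) X := hU.comp X hI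
  rw [kelvin_eq_mul_rpow σ U hlam,
    (((hasFDerivAt_sqDist_rpow _ _ hq).fun_mul hUI.hasFDerivAt).const_mul _).fderiv]
  simp only [smul_apply, add_apply, smul_eq_mul, dotL_apply, fderiv_comp_inversion_apply hU hX,
    Real.rpow_sub_one hq]
  field_simp
  ring

lemma lapl_kelvin (hlam : 0 ≤ lam) (hX : X ≠ (xb, 0))
    (hU : ContDiffAt ℝ 2 U (inversion xb lam X)) :
    lapl (kelvin σ U xb lam) X =
      lam ^ ((n : ℝ) - 2 * σ) *
        (sqDist (xb, 0) X ^ (-((n : ℝ) - 2 * σ) / 2) / sqDist (xb, 0) X ^ 2) *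
        (lam ^ 4 * lapl U (inversion xb lam X) + (1 - 2 * σ) *
          (((n : ℝ) - 2 * σ) * sqDist (xb, 0) X * U (inversion xb lam X) +
            2 * lam ^ 2 * fderiv ℝ U (inversion xb lam X) (X - (xb, 0)))) := by
  have hq := sqDist_ne_zero hX
  have hzz : dot (X - (xb, 0)) (X - (xb, 0)) = sqDist (xb, 0) X := rfl
  have hUI : ContDiffAt ℝ 2 (fun Y => U (inversion xb lam Y)) X :=
    hU.comp X (contDiffAt_inversion xb lam hX)
  have hcross : ∀ v, fderiv ℝ (fun Y => sqDist (xb, 0) Y ^ (-((n : ℝ) - 2 * σ) / 2)) X v *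
      fderiv ℝ (fun Y => U (inversion xb lam Y)) X v =
      2 * (-((n : ℝ) - 2 * σ) / 2) *
        (sqDist (xb, 0) X ^ (-((n : ℝ) - 2 * σ) / 2) / sqDist (xb, 0) X) *
        (dot (X - (xb, 0)) v * fderiv ℝ (fun Y => U (inversion xb lam Y)) X v) := fun v => by
    rw [fderiv_sqDist_rpow_apply _ _ hq]
    ring
  rw [kelvin_eq_mul_rpow σ U hlam, lapl_const_mul,
    lapl_mul (contDiffAt_sqDist_rpow _ _ hq) hUI, lapl_sqDist_rpow _ _ hq,
    lapl_comp_inversion hU hX]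
  simp only [hcross, basisSum_const_mul, basisSum_dot_mul]
  simp only [fderiv_comp_inversion_apply (hU.differentiableAt two_ne_zero) hX, hzz]
  field_simp
  ring

end Kelvin

end Pt

theorem stmt_14_general (n : ℕ) (σ : ℝ)
    (Ω : Set (Pt n)) (hΩopen : IsOpen Ω)
    (U : Pt n → ℝ) (hU : ContDiffOn ℝ 2 U Ω)
    (heq : ∀ X ∈ Ω, lapl U X + ((1 - 2 * σ) / X.2) * dt U X = 0)
    (xb : EuclideanSpace ℝ (Fin n)) (lam : ℝ) (hlam : 0 < lam) :
    ∀ ξ : Pt n, 0 < ξ.2 → ξ ≠ ((xb, (0 : ℝ)) : Pt n) → inversion xb lam ξ ∈ Ω →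
      lapl (kelvin σ U xb lam) ξ + ((1 - 2 * σ) / ξ.2) * dt (kelvin σ U xb lam) ξ = 0 := by
  intro ξ hs hξ hmem
  have hUξ : ContDiffAt ℝ 2 U (inversion xb lam ξ) := hU.contDiffAt (hΩopen.mem_nhds hmem)
  have hP := heq _ hmem
  rw [Pt.inversion_snd] at hP
  have hdot : Pt.dot (ξ - (xb, 0)) (0, 1) = ξ.2 := by simp [Pt.dot]
  rw [dt, Pt.lapl_kelvin σ hlam.le hξ hUξ, Pt.fderiv_kelvin_apply σ hlam.le hξ
    (hUξ.differentiableAt two_ne_zero), hdot]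
  calc _ = lam ^ ((n : ℝ) - 2 * σ) *
        (Pt.sqDist (xb, 0) ξ ^ (-((n : ℝ) - 2 * σ) / 2) / Pt.sqDist (xb, 0) ξ ^ 2) * lam ^ 4 *
        (lapl U (inversion xb lam ξ) + (1 - 2 * σ) / (lam ^ 2 / Pt.sqDist (xb, 0) ξ * ξ.2) *
          dt U (inversion xb lam ξ)) := by
        rw [dt]
        field_simp
        ring
    _ = 0 := by rw [hP, mul_zero]

/-- The degenerate equation `ΔU + ((1-2σ)/t)∂_t U = 0` is invariant
under the Kelvin transform with respect to balls centered on the boundary hyperplane. -/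
theorem stmt_14 (n : ℕ) (hn : 2 ≤ n) (σ : ℝ) (hσ : σ ∈ Set.Ioo (0 : ℝ) 1)
    (Ω : Set (Pt n)) (hΩopen : IsOpen Ω) (hΩ : Ω ⊆ {X : Pt n | 0 < X.2})
    (U : Pt n → ℝ) (hU : ContDiffOn ℝ 2 U Ω)
    (heq : ∀ X ∈ Ω, lapl U X + ((1 - 2 * σ) / X.2) * dt U X = 0)
    (xb : EuclideanSpace ℝ (Fin n)) (lam : ℝ) (hlam : 0 < lam) :
    ∀ ξ : Pt n, 0 < ξ.2 → ξ ≠ ((xb, (0 : ℝ)) : Pt n) → inversion xb lam ξ ∈ Ω →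
      lapl (kelvin σ U xb lam) ξ + ((1 - 2 * σ) / ξ.2) * dt (kelvin σ U xb lam) ξ = 0 :=
  stmt_14_general n σ Ω hΩopen U hU heq xb lam hlam
end
end

section
/- Let n ≥ 1, M > 0, and let v : ℝⁿ → ℝ. For a unit vector e ∈ ℝⁿ, μ ∈ ℝ and y ∈ ℝⁿ, let y_{μ,e} := y + 2(μ − y·e)e denote the reflection of y across the hyperplane {z : z·e = μ}. Suppose that for every unit vector e, every μ > M, and every y with y·e ≥ μ and |y_{μ,e}| ≥ 1, one has v(y) ≤ v(y_{μ,e}). Then v(y) ≤ v(x) for all x, y ∈ ℝⁿ with |x| > 1 and |y| ≥ |x| + 3M. -/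
open scoped RealInnerProductSpace

noncomputable section

/-- Monotonicity from reflections: if `v` increases under reflection
across every hyperplane `{z·e = μ}` with `μ > M` (for points on the far side whose
reflections have norm at least `1`), then `v(y) ≤ v(x)` whenever `|x| > 1` and
`|y| ≥ |x| + 3M`. -/
theorem stmt_18 (n : ℕ) (hn : 1 ≤ n) (M : ℝ) (hM : 0 < M)
    (v : EuclideanSpace ℝ (Fin n) → ℝ)
    (hrefl : ∀ e : EuclideanSpace ℝ (Fin n), ‖e‖ = 1 → ∀ μ : ℝ, M < μ →
      ∀ y : EuclideanSpace ℝ (Fin n), μ ≤ ⟪y, e⟫ →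
        1 ≤ ‖y + (2 * (μ - ⟪y, e⟫)) • e‖ →
        v y ≤ v (y + (2 * (μ - ⟪y, e⟫)) • e)) :
    ∀ x y : EuclideanSpace ℝ (Fin n), 1 < ‖x‖ → ‖x‖ + 3 * M ≤ ‖y‖ → v y ≤ v x := by
  intro x y hx hy
  have hxy : x ≠ y := by
    intro h; subst h; linarith
  have hd : (0:ℝ) < ‖y - x‖ := by
    rw [norm_pos_iff, sub_ne_zero]; exact Ne.symm hxy
  set d := ‖y - x‖ with hdd
  set e : EuclideanSpace ℝ (Fin n) := (d⁻¹) • (y - x) with he_def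
  have he : ‖e‖ = 1 := by
    rw [he_def, norm_smul, ← hdd, Real.norm_eq_abs, abs_of_pos (inv_pos.mpr hd)]
    field_simp
  set μ := (‖y‖^2 - ‖x‖^2) / (2*d) with hμ_def
  have hsq : d^2 = ‖y‖^2 - 2*⟪y,x⟫ + ‖x‖^2 := by
    rw [hdd]; exact norm_sub_sq_real y x
  set p := ⟪y,x⟫ with hp
  have hinner : ⟪y, e⟫ = μ + d/2 := by
    rw [he_def, real_inner_smul_right, inner_sub_right,
      real_inner_self_eq_norm_sq, ← hp, hμ_def]
    field_simp
    nlinarith [hsq]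
  have hμ : M < μ := by
    rw [hμ_def, lt_div_iff₀ (by linarith)]
    have h1 : d ≤ ‖y‖ + ‖x‖ := norm_sub_le y x
    nlinarith [norm_nonneg x, norm_nonneg y]
  have hye : μ ≤ ⟪y, e⟫ := by rw [hinner]; linarith
  have hkey : y + (2*(μ - ⟪y,e⟫)) • e = x := by
    rw [hinner]
    have h2 : (2*(μ - (μ + d/2))) = -d := by ring
    rw [h2, he_def, smul_smul]
    have h3 : -d * d⁻¹ = -1 := by field_simp
    rw [h3, neg_one_smul]
    abel
  have h := hrefl e he μ hμ y hye (by rw [hkey]; linarith)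
  rwa [hkey] at h
end
end
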